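/- arXiv:2512.01414 — 11 statements merged into one kernel-verified Lean document; each statement's English description precedes it below -/
import Mathlib

section
/- Let B_s, B_d be n×n complex matrices and let λ ∈ ℂ be an eigenvalue of B_s whose algebraic multiplicity (the multiplicity of λ as a root of the characteristic polynomial of B_s) equals its geometric multiplicity (the dimension of the kernel of B_s − λ·I). Then there exist μ ∈ ℂ and vectors x_s, x_d ∈ ℂⁿ with x_s ≠ 0 such that B_s·x_s = λ·x_s and B_s·x_d + B_d·x_s = λ·x_d + μ·x_s; equivalently, the dual complex matrix B̂ = B_s + B_d·ε has the eigenvalue λ + μ·ε with an appreciable eigenvector. -/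
/-! With `A = B_s - λ`, equality of algebraic and geometric multiplicity says that the
generalized eigenspace of `A` at `0` is just `ker A`; hence `ker A ∩ range A = 0` and
`ℂⁿ = ker A ⊕ range A`.
An eigenpair `(μ, x_s)` of the compression of `B_d` to `ker A` along `range A` then gives
`B_d x_s - μ x_s ∈ range A`, which is the second equation with `x_d` read off from a preimage. -/

open Matrix Module LinearMap

namespace Module.End

variable {K V : Type*} [Field K] [AddCommGroup V] [Module K V] [FiniteDimensional K V]

theorem isCompl_ker_range_of_maxGenEigenspace_zero_le {f : End K V}
    (h : f.maxGenEigenspace 0 ≤ ker f) : IsCompl (ker f) (range f) := by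
  refine (Submodule.isCompl_iff_disjoint _ _ ?_).mpr ?_
  · rw [add_comm, finrank_range_add_finrank_ker]
  rw [Submodule.disjoint_def]
  rintro _ hx ⟨y, rfl⟩
  exact h <| (f.mem_maxGenEigenspace 0 y).mpr ⟨2, by simpa [sq] using hx⟩

end Module.End

theorem Submodule.exists_sub_smul_mem_of_isCompl {K V : Type*} [Field K] [IsAlgClosed K]
    [AddCommGroup V] [Module K V] [FiniteDimensional K V] {p q : Submodule K V}
    (hpq : IsCompl p q) (hp : p ≠ ⊥) (g : End K V) :
    ∃ μ : K, ∃ x ∈ p, x ≠ 0 ∧ g x - μ • x ∈ q := by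
  have : Nontrivial p := Submodule.nontrivial_iff_ne_bot.mpr hp
  obtain ⟨μ, hμ⟩ := End.exists_eigenvalue (p.projectionOnto q hpq ∘ₗ g ∘ₗ p.subtype)
  obtain ⟨x, hx⟩ := hμ.exists_hasEigenvector
  have hproj : p.projection q hpq (g x) = μ • x := congrArg Subtype.val hx.apply_eq_smul
  refine ⟨μ, x, x.2, by simpa using hx.2, ?_⟩
  rw [← hproj, ← projection_eq_self_sub_projection]
  exact projection_apply_mem _ _

theorem Matrix.rootMultiplicity_charpoly_eq_finrank_maxGenEigenspace {n K : Type*} [Fintype n]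
    [DecidableEq n] [Field K] (A : Matrix n n K) (c : K) :
    A.charpoly.rootMultiplicity c = finrank K (End.maxGenEigenspace (A - c • 1).mulVecLin 0) := by
  have : (A - c • 1).mulVecLin = A.mulVecLin - c • 1 := by ext; simp
  rw [this, ← End.maxGenEigenspace_eq_maxGenEigenspace_zero,
    LinearMap.finrank_maxGenEigenspace_eq, charpoly_mulVecLin]

theorem stmt3 {n : ℕ} (Bs Bd : Matrix (Fin n) (Fin n) ℂ) (lam : ℂ)
    (hroot : Bs.charpoly.IsRoot lam)
    (hmult : Polynomial.rootMultiplicity lam Bs.charpoly =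
      Module.finrank ℂ (LinearMap.ker (Bs - lam • 1).mulVecLin)) :
    ∃ (μ : ℂ) (xs xd : Fin n → ℂ), xs ≠ 0 ∧ Bs.mulVec xs = lam • xs ∧
      Bs.mulVec xd + Bd.mulVec xs = lam • xd + μ • xs := by
  set A := (Bs - lam • 1).mulVecLin
  have hker : ker A = End.maxGenEigenspace A 0 := by
    refine Submodule.eq_of_le_of_finrank_le ?_ ?_
    · rw [← End.eigenspace_zero]; exact End.eigenspace_le_maxGenEigenspace
    · rw [← hmult, Bs.rootMultiplicity_charpoly_eq_finrank_maxGenEigenspace]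
  have hne : ker A ≠ ⊥ := by
    intro hbot
    rw [hbot, finrank_bot] at hmult
    exact ((Polynomial.rootMultiplicity_pos Bs.charpoly_monic.ne_zero).mpr hroot).ne' hmult
  obtain ⟨μ, xs, hxs, hxs0, y, hy⟩ :=
    Submodule.exists_sub_smul_mem_of_isCompl
      (End.isCompl_ker_range_of_maxGenEigenspace_zero_le hker.ge) hne Bd.mulVecLin
  have hA : ∀ v, A v = Bs *ᵥ v - lam • v := fun v => by simp [A]
  rw [mem_ker, hA, sub_eq_zero] at hxs
  rw [hA, mulVecLin_apply] at hy
  refine ⟨μ, xs, -y, hxs0, hxs, ?_⟩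
  rw [mulVec_neg]
  linear_combination (norm := module) -hy
end

section
/- Let B_s, B_d be n×n complex matrices and let λ ∈ ℂ be an eigenvalue of B_s whose algebraic multiplicity (multiplicity of λ as a root of the characteristic polynomial of B_s) equals its geometric multiplicity (dimension of the kernel of B_s − λ·I). Then the set { μ ∈ ℂ | ∃ x_s x_d : ℂⁿ, x_s ≠ 0 ∧ B_s·x_s = λ·x_s ∧ B_s·x_d + B_d·x_s = λ·x_d + μ·x_s } is finite; that is, the dual complex matrix B̂ = B_s + B_d·ε has only finitely many eigenvalues whose standard part equals λ. -/
/-!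
Put `A = B_s - λ I`. Equality of algebraic and geometric multiplicity means `ker A` is the whole
generalized eigenspace, so `ker A² = ker A` and `ℂⁿ = ker A ⊕ range A`. The dual-part equation says
exactly that `B_d x_s - μ x_s ∈ range A` with `0 ≠ x_s ∈ ker A`; projecting onto `ker A` along
`range A`, `μ` is an eigenvalue of the compression of `B_d` to `ker A`, of which there are finitely
many.
-/

open Module

variable {K V : Type*} [Field K] [AddCommGroup V] [Module K V]

namespace Submodule

noncomputable def compression {p q : Submodule K V} (h : IsCompl p q) (D : End K V) : End K p :=
  p.projectionOnto q h ∘ₗ D ∘ₗ p.subtype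

lemma hasEigenvalue_compression {p q : Submodule K V} (h : IsCompl p q) (D : End K V) {μ : K}
    {x : V} (hxp : x ∈ p) (hx0 : x ≠ 0) (hxq : D x - μ • x ∈ q) :
    (compression h D).HasEigenvalue μ := by
  refine End.hasEigenvalue_of_hasEigenvector (x := ⟨x, hxp⟩)
    ⟨End.mem_eigenspace_iff.mpr ?_, by simpa using hx0⟩
  have hDx : D x = μ • x + (D x - μ • x) := (add_sub_cancel _ _).symm
  simp only [compression, LinearMap.comp_apply, Submodule.subtype_apply]
  rw [hDx, map_add, map_smul, projectionOnto_apply_of_mem_left h hxp,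
    projectionOnto_apply_of_mem_right h hxq, add_zero]

lemma finite_setOf_sub_smul_mem_of_isCompl [FiniteDimensional K V] {p q : Submodule K V}
    (h : IsCompl p q) (D : End K V) :
    {μ : K | ∃ x ∈ p, x ≠ 0 ∧ D x - μ • x ∈ q}.Finite :=
  (End.finite_hasEigenvalue (compression h D)).subset
    fun _ ⟨_, hxp, hx0, hxq⟩ ↦ hasEigenvalue_compression h D hxp hx0 hxq

end Submodule

namespace LinearMap

lemma isCompl_ker_range_of_ker_sq_le [FiniteDimensional K V] {g : End K V}
    (h : ker (g ^ 2) ≤ ker g) : IsCompl (ker g) (range g) := by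
  refine (Submodule.isCompl_iff_disjoint _ _ ?_).mpr ?_
  · rw [add_comm, finrank_range_add_finrank_ker]
  · rw [Submodule.disjoint_def]
    rintro _ hx ⟨y, rfl⟩
    exact h (by simpa [sq] using hx)

end LinearMap

namespace Module.End

lemma ker_sub_smul_eq_maxGenEigenspace [FiniteDimensional K V] {f : End K V} {μ : K}
    (h : finrank K (LinearMap.ker (f - μ • 1)) = f.charpoly.rootMultiplicity μ) :
    LinearMap.ker (f - μ • 1) = f.maxGenEigenspace μ := by
  rw [← eigenspace_def] at h ⊢
  exact Submodule.eq_of_le_of_finrank_le eigenspace_le_maxGenEigenspace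
    (by rw [LinearMap.finrank_maxGenEigenspace_eq, h])

lemma isCompl_ker_range_sub_smul [FiniteDimensional K V] {f : End K V} {μ : K}
    (h : finrank K (LinearMap.ker (f - μ • 1)) = f.charpoly.rootMultiplicity μ) :
    IsCompl (LinearMap.ker (f - μ • 1)) (LinearMap.range (f - μ • 1)) :=
  LinearMap.isCompl_ker_range_of_ker_sq_le fun _ hy ↦
    (ker_sub_smul_eq_maxGenEigenspace h).ge ((mem_maxGenEigenspace _ _ _).mpr ⟨2, hy⟩)

end Module.End

theorem stmt4_general {n : ℕ} (Bs Bd : Matrix (Fin n) (Fin n) ℂ) (lam : ℂ)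
    (hmult : Polynomial.rootMultiplicity lam Bs.charpoly =
      Module.finrank ℂ (LinearMap.ker (Bs - lam • 1).mulVecLin)) :
    {μ : ℂ | ∃ xs xd : Fin n → ℂ, xs ≠ 0 ∧ Bs.mulVec xs = lam • xs ∧
      Bs.mulVec xd + Bd.mulVec xs = lam • xd + μ • xs}.Finite := by
  set A := (Bs - lam • 1).mulVecLin
  have hA_apply (x : Fin n → ℂ) : A x = Bs.mulVec x - lam • x := by simp [A]
  have hcompl : IsCompl (LinearMap.ker A) (LinearMap.range A) := by
    have hA : Bs.mulVecLin - lam • 1 = A := LinearMap.ext fun x ↦ (hA_apply x).symm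
    rw [← hA] at hmult ⊢
    exact End.isCompl_ker_range_sub_smul (by rw [Matrix.charpoly_mulVecLin, hmult])
  refine (Submodule.finite_setOf_sub_smul_mem_of_isCompl hcompl Bd.mulVecLin).subset ?_
  rintro μ ⟨xs, xd, hxs0, hxs, hxd⟩
  refine ⟨xs, by simp [hA_apply, hxs], hxs0, -xd, ?_⟩
  rw [map_neg, hA_apply, Matrix.mulVecLin_apply]
  linear_combination (norm := module) -hxd

theorem stmt4 {n : ℕ} (Bs Bd : Matrix (Fin n) (Fin n) ℂ) (lam : ℂ)
    (hroot : Bs.charpoly.IsRoot lam)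
    (hmult : Polynomial.rootMultiplicity lam Bs.charpoly =
      Module.finrank ℂ (LinearMap.ker (Bs - lam • 1).mulVecLin)) :
    {μ : ℂ | ∃ xs xd : Fin n → ℂ, xs ≠ 0 ∧ Bs.mulVec xs = lam • xs ∧
      Bs.mulVec xd + Bd.mulVec xs = lam • xd + μ • xs}.Finite :=
  stmt4_general Bs Bd lam hmult
end

section
/- Let Â = A_s + A_d·ε be an n×n dual quaternion matrix, and let χ(A_s) ∈ ℂ^{2n×2n} be the complex adjoint matrix of A_s. Suppose λ₁ ∈ ℂ is a root of the characteristic polynomial of χ(A_s) such that: (a) the root multiplicity of λ₁ in the characteristic polynomial of χ(A_s) equals the dimension of the kernel of χ(A_s) − λ₁·I; and (b) every root μ of the characteristic polynomial of χ(A_s) satisfies |μ| ≤ |λ₁|, with equality only when μ = λ₁ or μ = conj(λ₁). Then there exists λ_d ∈ ℍ and an appreciable vector x̂ : Fin n → DualNumber ℍ such that Â.mulVec x̂ = fun i => (x̂ i) * (λ₁ + λ_d·ε), where λ₁ is regarded as a quaternion with zero j- and k-parts; i.e., Â has a right eigenvalue whose standard part is λ₁. -/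
local notation "ℍ" => Quaternion ℝ

/-- The dual quaternion matrix with standard part `A` and dual part `B`. -/
noncomputable def dm {ι : Type*} (A B : Matrix ι ι ℍ) : Matrix ι ι (DualNumber ℍ) :=
  A.map TrivSqZeroExt.inl + B.map TrivSqZeroExt.inr

/-- The first complex component of a quaternion: `q = c1 q + (c2 q) * j`. -/
noncomputable def c1 (q : ℍ) : ℂ := ⟨q.re, q.imI⟩

/-- The second complex component of a quaternion: `q = c1 q + (c2 q) * j`. -/
noncomputable def c2 (q : ℍ) : ℂ := ⟨q.imJ, q.imK⟩

/-- The complex adjoint matrix of a quaternion matrix. -/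
noncomputable def chi {n : ℕ} (M : Matrix (Fin n) (Fin n) ℍ) :
    Matrix (Fin n ⊕ Fin n) (Fin n ⊕ Fin n) ℂ :=
  Matrix.fromBlocks (M.map c1) (M.map c2)
    (-(M.map fun q => starRingEnd ℂ (c2 q))) (M.map fun q => starRingEnd ℂ (c1 q))


/-!
Since `λ₁` is a semisimple eigenvalue of `χ(A_s)` (algebraic and geometric multiplicities agree),
`ℂ^{2n}` splits as `ker (χ(A_s) - λ₁) ⊕ range (χ(A_s) - λ₁)`. Compressing `χ(A_d)` to the kernel
along this splitting and taking an eigenvector `u` of the compression, with eigenvalue `c`, puts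
`c u - χ(A_d) u` in the range: `χ(A_s) v + χ(A_d) u = λ₁ v + c u` for some `v`. As `χ` is
multiplicative, a vector of `ℂ^{2n}` is the first column of `χ(x)` for a unique quaternion vector
`x`, and `χ(A)` acts on it as `A` acts on `x`; so `u` and `v` become quaternion vectors `x_s ≠ 0`
and `x_d` with `A_s x_s = x_s λ₁` and `A_s x_d + A_d x_s = x_d λ₁ + x_s c`, which are the standard
and dual parts of `Â (x_s + x_d ε) = (x_s + x_d ε)(λ₁ + c ε)`.
-/

open Module LinearMap Matrix TrivSqZeroExt ComplexConjugate

namespace Module.End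

variable {K V : Type*} [Field K] [AddCommGroup V] [Module K V] [FiniteDimensional K V]

lemma isCompl_ker_range_of_ker_sq_le {f : End K V} (h : ker (f ^ 2) ≤ ker f) :
    IsCompl (ker f) (range f) := by
  refine (Submodule.isCompl_iff_disjoint _ _ ?_).mpr ?_
  · rw [add_comm, f.finrank_range_add_finrank_ker]
  · rw [Submodule.disjoint_def]
    rintro _ hx ⟨w, rfl⟩
    exact h (by simpa [sq] using hx)

lemma ker_sq_sub_smul_le_of_finrank_eigenspace_eq {f : End K V} {μ : K}
    (h : finrank K (f.eigenspace μ) = f.charpoly.rootMultiplicity μ) :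
    ker ((f - μ • 1) ^ 2) ≤ ker (f - μ • 1) := by
  have hmax : f.eigenspace μ = f.maxGenEigenspace μ :=
    Submodule.eq_of_le_of_finrank_le eigenspace_le_maxGenEigenspace
      (by rw [finrank_maxGenEigenspace_eq, h])
  intro x hx
  rw [← eigenspace_def, hmax, mem_maxGenEigenspace]
  exact ⟨2, hx⟩

lemma exists_hasEigenvector_sub_smul_apply_eq [IsAlgClosed K] (f g : End K V) {μ : K}
    (hμ : f.HasEigenvalue μ)
    (h : finrank K (f.eigenspace μ) = f.charpoly.rootMultiplicity μ) :
    ∃ (c : K) (u v : V), f.HasEigenvector μ u ∧ (f - μ • 1) v = c • u - g u := by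
  set φ := f - μ • 1
  have hcompl := isCompl_ker_range_of_ker_sq_le (ker_sq_sub_smul_le_of_finrank_eigenspace_eq h)
  have : Nontrivial (ker φ) :=
    Submodule.nontrivial_iff_ne_bot.mpr (by rw [← eigenspace_def]; exact hμ)
  set π := Submodule.projectionOnto _ _ hcompl
  obtain ⟨c, hc⟩ := exists_eigenvalue (π ∘ₗ g ∘ₗ (ker φ).subtype)
  obtain ⟨u, hu⟩ := hc.exists_hasEigenvector
  obtain ⟨v, hv⟩ : c • (u : V) - g u ∈ range φ := by
    rw [← Submodule.projectionOnto_apply_eq_zero_iff hcompl, map_sub, map_smul,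
      Submodule.projectionOnto_apply_left, ← hu.apply_eq_smul, sub_eq_zero]
    rfl
  refine ⟨c, u, v, hasEigenvector_iff.mpr ⟨?_, by simpa using hu.2⟩, hv⟩
  rw [eigenspace_def]
  exact u.2

end Module.End

theorem Matrix.exists_mulVec_eq_smul_and_mulVec_add_mulVec_eq {ι K : Type*} [Fintype ι]
    [DecidableEq ι] [Field K] [IsAlgClosed K] (M G : Matrix ι ι K) {μ : K}
    (hroot : M.charpoly.IsRoot μ)
    (h : M.charpoly.rootMultiplicity μ = finrank K (ker (M - μ • 1).mulVecLin)) :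
    ∃ (c : K) (u v : ι → K), u ≠ 0 ∧ M *ᵥ u = μ • u ∧ M *ᵥ v + G *ᵥ u = μ • v + c • u := by
  have hsub : (M - μ • 1).mulVecLin = M.mulVecLin - μ • 1 := by
    ext; simp
  obtain ⟨c, u, v, hu, hv⟩ :=
    Module.End.exists_hasEigenvector_sub_smul_apply_eq M.mulVecLin G.mulVecLin
      ((Module.End.hasEigenvalue_iff_isRoot_charpoly _ _).mpr (by simpa using hroot))
      (by rw [Module.End.eigenspace_def, ← hsub, ← h, charpoly_mulVecLin])
  refine ⟨c, u, v, hu.2, by simpa using hu.apply_eq_smul, ?_⟩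
  rw [← hsub, mulVecLin_apply, sub_mulVec, smul_mulVec, one_mulVec] at hv
  exact (sub_eq_sub_iff_add_eq_add.mp hv).trans (add_comm _ _)

/-- The quaternion `z - conj w * j`, whose complex adjoint has first column `(z, w)`. -/
@[simps] noncomputable def quatOfColumn (p : ℂ × ℂ) : ℍ := ⟨p.1.re, p.1.im, -p.2.re, p.2.im⟩

@[simps] noncomputable def quatOfComplex (z : ℂ) : ℍ := ⟨z.re, z.im, 0, 0⟩

lemma quatOfColumn_add (p q : ℂ × ℂ) :
    quatOfColumn (p + q) = quatOfColumn p + quatOfColumn q := by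
  ext <;> simp [add_comm]

lemma quatOfColumn_sum {ι : Type*} (s : Finset ι) (f : ι → ℂ × ℂ) :
    quatOfColumn (∑ i ∈ s, f i) = ∑ i ∈ s, quatOfColumn (f i) :=
  map_sum (AddMonoidHom.mk' quatOfColumn quatOfColumn_add) f s

lemma quatOfColumn_eq_zero {p : ℂ × ℂ} (h : quatOfColumn p = 0) : p = 0 := by
  simp_all [Quaternion.ext_iff, Complex.ext_iff, Prod.ext_iff, Quaternion.re_zero,
    Quaternion.imI_zero, Quaternion.imJ_zero, Quaternion.imK_zero]

lemma mul_quatOfColumn (a : ℍ) (z w : ℂ) :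
    a * quatOfColumn (z, w) =
      quatOfColumn (c1 a * z + c2 a * w, -conj (c2 a) * z + conj (c1 a) * w) := by
  ext <;> simp [c1, c2] <;> ring

lemma quatOfColumn_mul_quatOfComplex (z w l : ℂ) :
    quatOfColumn (z, w) * quatOfComplex l = quatOfColumn (z * l, w * l) := by
  ext <;> simp [mul_comm, neg_add_eq_sub]

noncomputable def ofAdjointColumn {n : ℕ} (u : Fin n ⊕ Fin n → ℂ) : Fin n → ℍ :=
  fun i => quatOfColumn (u (.inl i), u (.inr i))

lemma ofAdjointColumn_eq_zero {n : ℕ} {u : Fin n ⊕ Fin n → ℂ} (h : ofAdjointColumn u = 0) :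
    u = 0 := by
  ext (i | i)
  exacts [congr_arg Prod.fst (quatOfColumn_eq_zero (congr_fun h i)),
    congr_arg Prod.snd (quatOfColumn_eq_zero (congr_fun h i))]

lemma ofAdjointColumn_add {n : ℕ} (u v : Fin n ⊕ Fin n → ℂ) :
    ofAdjointColumn (u + v) = ofAdjointColumn u + ofAdjointColumn v :=
  funext fun _ => quatOfColumn_add (_, _) (_, _)

lemma ofAdjointColumn_smul {n : ℕ} (z : ℂ) (u : Fin n ⊕ Fin n → ℂ) :
    ofAdjointColumn (z • u) = fun i => ofAdjointColumn u i * quatOfComplex z := by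
  ext1 i
  simp only [ofAdjointColumn, quatOfColumn_mul_quatOfComplex, Pi.smul_apply, smul_eq_mul,
    mul_comm z]

lemma ofAdjointColumn_chi_mulVec {n : ℕ} (A : Matrix (Fin n) (Fin n) ℍ)
    (u : Fin n ⊕ Fin n → ℂ) :
    ofAdjointColumn (chi A *ᵥ u) = A *ᵥ ofAdjointColumn u := by
  ext1 i
  simp only [ofAdjointColumn, mulVec, dotProduct, mul_quatOfColumn, ← quatOfColumn_sum]
  congr 1
  ext1 <;> simp [chi, Fintype.sum_sum_type, Prod.fst_sum, Prod.snd_sum, Finset.sum_add_distrib]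

lemma inl_add_inr_mul_inl_add_inr {R : Type*} [Semiring R] (a b c d : R) :
    (inl a + inr b : DualNumber R) * (inl c + inr d) = inl (a * c) + inr (a * d + b * c) := by
  ext <;> simp

lemma dm_mulVec_inl_add_inr {ι : Type*} [Fintype ι] (As Ad : Matrix ι ι ℍ) (xs xd : ι → ℍ) :
    dm As Ad *ᵥ (fun i => inl (xs i) + inr (xd i)) =
      fun i => inl ((As *ᵥ xs) i) + inr ((As *ᵥ xd + Ad *ᵥ xs) i) := by
  ext i <;> simp [dm, mulVec, dotProduct, fst_sum, snd_sum, Finset.sum_add_distrib]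

theorem stmt5_general {n : ℕ} (As Ad : Matrix (Fin n) (Fin n) ℍ) (lam1 : ℂ)
    (hroot : (chi As).charpoly.IsRoot lam1)
    (ha : Polynomial.rootMultiplicity lam1 (chi As).charpoly =
      Module.finrank ℂ (LinearMap.ker (chi As - lam1 • 1).mulVecLin)) :
    ∃ (lamd : ℍ) (x : Fin n → DualNumber ℍ), (fun i => (x i).fst) ≠ 0 ∧
      (dm As Ad).mulVec x =
        fun i => x i *
          ((TrivSqZeroExt.inl (⟨lam1.re, lam1.im, 0, 0⟩ : ℍ) +
            TrivSqZeroExt.inr lamd : DualNumber ℍ)) := by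
  obtain ⟨c, u, v, hu0, hu, hv⟩ :=
    (chi As).exists_mulVec_eq_smul_and_mulVec_add_mulVec_eq (chi Ad) hroot ha
  set xs := ofAdjointColumn u
  set xd := ofAdjointColumn v
  have hs : As *ᵥ xs = fun i => xs i * quatOfComplex lam1 := by
    rw [← ofAdjointColumn_chi_mulVec, hu, ofAdjointColumn_smul]
  have hd : As *ᵥ xd + Ad *ᵥ xs =
      fun i => xd i * quatOfComplex lam1 + xs i * quatOfComplex c := by
    rw [← ofAdjointColumn_chi_mulVec, ← ofAdjointColumn_chi_mulVec, ← ofAdjointColumn_add, hv,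
      ofAdjointColumn_add, ofAdjointColumn_smul, ofAdjointColumn_smul]
    rfl
  refine ⟨quatOfComplex c, fun i => inl (xs i) + inr (xd i), fun h => hu0 ?_, ?_⟩
  · exact ofAdjointColumn_eq_zero (funext fun i => by simpa using congr_fun h i)
  · ext1 i
    rw [dm_mulVec_inl_add_inr, hs, hd]
    refine .trans ?_ (inl_add_inr_mul_inl_add_inr (xs i) (xd i) (quatOfComplex lam1) _).symm
    dsimp only
    rw [add_comm (xd i * _)]

theorem stmt5 {n : ℕ} (As Ad : Matrix (Fin n) (Fin n) ℍ) (lam1 : ℂ)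
    (hroot : (chi As).charpoly.IsRoot lam1)
    (ha : Polynomial.rootMultiplicity lam1 (chi As).charpoly =
      Module.finrank ℂ (LinearMap.ker (chi As - lam1 • 1).mulVecLin))
    (hb : ∀ μ : ℂ, (chi As).charpoly.IsRoot μ →
      ‖μ‖ ≤ ‖lam1‖ ∧ (‖μ‖ = ‖lam1‖ → μ = lam1 ∨ μ = starRingEnd ℂ lam1)) :
    ∃ (lamd : ℍ) (x : Fin n → DualNumber ℍ), (fun i => (x i).fst) ≠ 0 ∧
      (dm As Ad).mulVec x =
        fun i => x i *
          ((TrivSqZeroExt.inl (⟨lam1.re, lam1.im, 0, 0⟩ : ℍ) +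
            TrivSqZeroExt.inr lamd : DualNumber ℍ)) :=
  stmt5_general As Ad lam1 hroot ha
end

section
/- Let m ≥ 1, let n : Fin m → ℕ, let ι = Σ i : Fin m, Fin (n i), and let A_s, A_d be quaternion matrices indexed by ι. Suppose P_s is an invertible quaternion matrix indexed by ι with P_s⁻¹·A_s·P_s = blockDiagonal' J for some family J with J i an (n i)×(n i) quaternion matrix, and suppose the Sylvester equations between distinct blocks are solvable: for all i ≠ j and every (n i)×(n j) quaternion matrix C there exists X with (J i)·X − X·(J j) = C. Then there exist a quaternion matrix P_d indexed by ι and a family H with H i an (n i)×(n i) quaternion matrix such that the dual quaternion matrix P̂ = P_s + P_d·ε is invertible and P̂⁻¹·(A_s + A_d·ε)·P̂ = blockDiagonal' (fun i => (J i) + (H i)·ε) as matrices over DualNumber ℍ. -/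
local notation "ℍ" => Quaternion ℝ

open Matrix TrivSqZeroExt

lemma dm_fst {ι : Type*} (A B : Matrix ι ι ℍ) (i j : ι) : (dm A B i j).fst = A i j := by
  simp [dm]

lemma dm_snd {ι : Type*} (A B : Matrix ι ι ℍ) (i j : ι) : (dm A B i j).snd = B i j := by
  simp [dm]

lemma dm_mul {ι : Type*} [Fintype ι] (A B C D : Matrix ι ι ℍ) :
    dm A B * dm C D = dm (A*C) (A*D + B*C) := by
  apply Matrix.ext; intro i j
  apply TrivSqZeroExt.ext
  · simp [Matrix.mul_apply, dm_fst, fst_sum, fst_mul]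
  · simp only [Matrix.mul_apply, dm_snd, dm_fst, snd_sum, snd_mul, smul_eq_mul,
      MulOpposite.smul_eq_mul_unop, MulOpposite.unop_op, Matrix.add_apply,
      Finset.sum_add_distrib]

lemma dm_one {ι : Type*} [DecidableEq ι] : dm (1 : Matrix ι ι ℍ) 0 = 1 := by
  apply Matrix.ext; intro i j
  apply TrivSqZeroExt.ext
  · simp [dm_fst, Matrix.one_apply, apply_ite (TrivSqZeroExt.fst (M := ℍ))]
  · simp [dm_snd, Matrix.one_apply, apply_ite (TrivSqZeroExt.snd (M := ℍ))]

lemma dm_bd {m : ℕ} {n : Fin m → ℕ} (J H : (i : Fin m) → Matrix (Fin (n i)) (Fin (n i)) ℍ) :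
    dm (Matrix.blockDiagonal' J) (Matrix.blockDiagonal' H) =
      Matrix.blockDiagonal' (fun i => dm (J i) (H i)) := by
  apply Matrix.ext; rintro ⟨i,a⟩ ⟨j,b⟩
  apply TrivSqZeroExt.ext
  · by_cases h : i = j
    · subst h
      simp [dm_fst, Matrix.blockDiagonal'_apply_eq]
    · simp [dm_fst, Matrix.blockDiagonal'_apply_ne _ _ _ h]
  · by_cases h : i = j
    · subst h
      simp [dm_snd, Matrix.blockDiagonal'_apply_eq]
    · simp [dm_snd, Matrix.blockDiagonal'_apply_ne _ _ _ h]

lemma bd_mul_apply {m : ℕ} {n : Fin m → ℕ}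
    (M : (i : Fin m) → Matrix (Fin (n i)) (Fin (n i)) ℍ)
    (X : Matrix ((i : Fin m) × Fin (n i)) ((i : Fin m) × Fin (n i)) ℍ)
    (i j : Fin m) (a : Fin (n i)) (b : Fin (n j)) :
    (Matrix.blockDiagonal' M * X) ⟨i,a⟩ ⟨j,b⟩ = ∑ c, M i a c * X ⟨i,c⟩ ⟨j,b⟩ := by
  rw [Matrix.mul_apply, ← Finset.univ_sigma_univ, Finset.sum_sigma]
  rw [Finset.sum_eq_single_of_mem i (Finset.mem_univ i)]
  · simp [Matrix.blockDiagonal'_apply_eq]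
  · intro k _ hk
    simp [Matrix.blockDiagonal'_apply_ne _ _ _ (Ne.symm hk)]

lemma mul_bd_apply {m : ℕ} {n : Fin m → ℕ}
    (M : (i : Fin m) → Matrix (Fin (n i)) (Fin (n i)) ℍ)
    (X : Matrix ((i : Fin m) × Fin (n i)) ((i : Fin m) × Fin (n i)) ℍ)
    (i j : Fin m) (a : Fin (n i)) (b : Fin (n j)) :
    (X * Matrix.blockDiagonal' M) ⟨i,a⟩ ⟨j,b⟩ = ∑ c, X ⟨i,a⟩ ⟨j,c⟩ * M j c b := by
  rw [Matrix.mul_apply, ← Finset.univ_sigma_univ, Finset.sum_sigma]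
  rw [Finset.sum_eq_single_of_mem j (Finset.mem_univ j)]
  · simp [Matrix.blockDiagonal'_apply_eq]
  · intro k _ hk
    simp [Matrix.blockDiagonal'_apply_ne _ _ _ hk]

theorem stmt6 {m : ℕ} (hm : 1 ≤ m) (n : Fin m → ℕ)
    (As Ad Ps Q : Matrix ((i : Fin m) × Fin (n i)) ((i : Fin m) × Fin (n i)) ℍ)
    (hQ1 : Ps * Q = 1) (hQ2 : Q * Ps = 1)
    (J : (i : Fin m) → Matrix (Fin (n i)) (Fin (n i)) ℍ)
    (hJ : Q * As * Ps = Matrix.blockDiagonal' J)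
    (hSyl : ∀ i j : Fin m, i ≠ j → ∀ C : Matrix (Fin (n i)) (Fin (n j)) ℍ,
      ∃ X : Matrix (Fin (n i)) (Fin (n j)) ℍ, J i * X - X * J j = C) :
    ∃ (Pd : Matrix ((i : Fin m) × Fin (n i)) ((i : Fin m) × Fin (n i)) ℍ)
      (H : (i : Fin m) → Matrix (Fin (n i)) (Fin (n i)) ℍ),
      IsUnit (dm Ps Pd) ∧
        Ring.inverse (dm Ps Pd) * dm As Ad * dm Ps Pd =
          Matrix.blockDiagonal' (fun i => dm (J i) (H i)) := by
  classical
  choose Xf hXf using hSyl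
  set B : Matrix ((i : Fin m) × Fin (n i)) ((i : Fin m) × Fin (n i)) ℍ := Q * Ad * Ps with hB
  set Xblk : ∀ i j : Fin m, Matrix (Fin (n i)) (Fin (n j)) ℍ := fun i j =>
    if h : i = j then 0 else Xf i j h (Matrix.of fun a b => -(B ⟨i,a⟩ ⟨j,b⟩)) with hXblk
  set X : Matrix ((i : Fin m) × Fin (n i)) ((i : Fin m) × Fin (n i)) ℍ :=
    Matrix.of fun p q => Xblk p.1 q.1 p.2 q.2 with hXdef
  set H : (i : Fin m) → Matrix (Fin (n i)) (Fin (n i)) ℍ :=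
    fun i => Matrix.of fun a b => B ⟨i,a⟩ ⟨i,b⟩ with hH
  have key : Matrix.blockDiagonal' J * X - X * Matrix.blockDiagonal' J + B
      = Matrix.blockDiagonal' H := by
    apply Matrix.ext; rintro ⟨i,a⟩ ⟨j,b⟩
    rw [Matrix.add_apply, Matrix.sub_apply, bd_mul_apply, mul_bd_apply]
    by_cases h : i = j
    · subst h
      have hX0 : ∀ c d : Fin (n i), X ⟨i,c⟩ ⟨i,d⟩ = 0 := by
        intro c d; simp [hXdef, hXblk]
      simp [hX0, Matrix.blockDiagonal'_apply_eq, hH]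
    · have hXv : ∀ (c : Fin (n i)) (d : Fin (n j)),
          X ⟨i,c⟩ ⟨j,d⟩ = Xf i j h (Matrix.of fun a b => -(B ⟨i,a⟩ ⟨j,b⟩)) c d := by
        intro c d; simp [hXdef, hXblk, h]
      have hs := congrFun (congrFun (hXf i j h (Matrix.of fun a b => -(B ⟨i,a⟩ ⟨j,b⟩))) a) b
      rw [Matrix.sub_apply, Matrix.mul_apply, Matrix.mul_apply] at hs
      simp only [hXv]
      rw [Matrix.blockDiagonal'_apply_ne _ _ _ h, hs]
      simp
  have h1 : dm Ps (Ps * X) * dm Q (-(X * Q)) = 1 := by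
    rw [dm_mul, hQ1, mul_neg, ← mul_assoc, neg_add_cancel, dm_one]
  have h2 : dm Q (-(X * Q)) * dm Ps (Ps * X) = 1 := by
    rw [dm_mul, hQ2, ← mul_assoc, hQ2, one_mul, neg_mul, mul_assoc, hQ2, mul_one,
      add_neg_cancel, dm_one]
  refine ⟨Ps * X, H, ⟨⟨_, _, h1, h2⟩, rfl⟩, ?_⟩
  have hinv : Ring.inverse (dm Ps (Ps * X)) = dm Q (-(X * Q)) :=
    Ring.inverse_unit (⟨dm Ps (Ps * X), dm Q (-(X * Q)), h1, h2⟩ :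
      (Matrix ((i : Fin m) × Fin (n i)) ((i : Fin m) × Fin (n i)) (DualNumber ℍ))ˣ)
  have hdual : Q * As * (Ps * X) + (Q * Ad + -(X * Q) * As) * Ps
      = Matrix.blockDiagonal' H := by
    rw [← key, ← hJ]
    simp only [add_mul, neg_mul, mul_assoc, sub_eq_add_neg,
      show Q * (Ad * Ps) = B from by rw [hB, mul_assoc]]
    abel
  rw [hinv, dm_mul, dm_mul, hJ, hdual, dm_bd]
end

section
/- Let m ≥ 1, let n : Fin m → ℕ, let ι = Σ i : Fin m, Fin (n i), and let A_s, A_d be complex matrices indexed by ι. Suppose P_s is an invertible complex matrix indexed by ι with P_s⁻¹·A_s·P_s = blockDiagonal' D for some family D with D i an (n i)×(n i) complex matrix, and suppose the blocks have pairwise disjoint spectra: for all i ≠ j, no λ ∈ ℂ is simultaneously a root of the characteristic polynomials of D i and of D j. Then there exist a complex matrix P_d indexed by ι and a family H with H i an (n i)×(n i) complex matrix such that the dual complex matrix P̂ = P_s + P_d·ε is invertible and P̂⁻¹·(A_s + A_d·ε)·P̂ = blockDiagonal' (fun i => (D i) + (H i)·ε) as matrices over DualNumber ℂ. -/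
/-!
Put `M = P_s⁻¹ A_s P_s`, `C = P_s⁻¹ A_d P_s` and look for `P_d = P_s X`. Conjugating by
`P̂ = P_s (1 + X ε)` keeps the standard part `M` and turns the dual part into `M X - X M + C`,
whose off-diagonal block `(i, j)` is `D_i X_ij - X_ij D_j + C_ij`. This vanishes once `X_ij`
solves the Sylvester equation `D_i Y - Y D_j = -C_ij`, which is solvable since `Y ↦ D_i Y - Y D_j`
is injective: the characteristic polynomials of `D_i` and `D_j` are coprime, so `χ_{D_j}(D_i)` is
invertible, and `D_i Y = Y D_j` gives `χ_{D_j}(D_i) Y = Y χ_{D_j}(D_j) = 0`.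
-/

/-- The dual complex matrix with standard part `A` and dual part `B`. -/
noncomputable def dmC {ι : Type*} (A B : Matrix ι ι ℂ) : Matrix ι ι (DualNumber ℂ) :=
  A.map TrivSqZeroExt.inl + B.map TrivSqZeroExt.inr

open Matrix Polynomial TrivSqZeroExt

theorem Polynomial.isCoprime_of_forall_not_isRoot {K : Type*} [Field K] [IsAlgClosed K]
    {p q : K[X]} (h : ∀ x, ¬(p.IsRoot x ∧ q.IsRoot x)) : IsCoprime p q :=
  (isCoprime_iff_aeval_ne_zero_of_isAlgClosed K K p q).mpr fun x => by
    simpa using not_and_or.mp (h x)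

namespace Matrix

section Sylvester

variable {p q : Type*} [Fintype p] [DecidableEq p] [Fintype q] [DecidableEq q]

theorem aeval_mul_eq_mul_aeval_of_mul_eq_mul {R : Type*} [CommRing R] {A : Matrix p p R}
    {B : Matrix q q R} {Y : Matrix p q R} (h : A * Y = Y * B) (f : R[X]) :
    aeval A f * Y = Y * aeval B f := by
  have hpow : ∀ k : ℕ, A ^ k * Y = Y * B ^ k := fun k => by
    induction k with
    | zero => simp
    | succ k ih => rw [pow_succ, pow_succ, Matrix.mul_assoc, h, ← Matrix.mul_assoc, ih,
        Matrix.mul_assoc]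
  induction f using Polynomial.induction_on' with
  | add f g hf hg => simp only [map_add, Matrix.add_mul, Matrix.mul_add, hf, hg]
  | monomial k a => simp only [aeval_monomial, Algebra.algebraMap_eq_smul_one, smul_one_mul,
      Matrix.smul_mul, Matrix.mul_smul, hpow k]

theorem eq_zero_of_mul_eq_mul_of_isCoprime_charpoly {R : Type*} [CommRing R]
    {A : Matrix p p R} {B : Matrix q q R} (hAB : IsCoprime A.charpoly B.charpoly)
    {Y : Matrix p q R} (h : A * Y = Y * B) : Y = 0 := by
  obtain ⟨a, b, hab⟩ := hAB
  calc Y = aeval A (a * A.charpoly + b * B.charpoly) * Y := by rw [hab, map_one, Matrix.one_mul]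
    _ = aeval A b * (Y * aeval B B.charpoly) := by
      rw [map_add, map_mul, map_mul, aeval_self_charpoly, Matrix.mul_zero, zero_add,
        Matrix.mul_assoc, aeval_mul_eq_mul_aeval_of_mul_eq_mul h]
    _ = 0 := by rw [aeval_self_charpoly, Matrix.mul_zero, Matrix.mul_zero]

theorem exists_mul_sub_mul_eq_of_isCoprime_charpoly {K : Type*} [Field K]
    {A : Matrix p p K} {B : Matrix q q K} (hAB : IsCoprime A.charpoly B.charpoly)
    (C : Matrix p q K) : ∃ Y : Matrix p q K, A * Y - Y * B = C := by
  let sylvester := mulLeftLinearMap q K A - mulRightLinearMap p K B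
  have hinj : Function.Injective sylvester := (injective_iff_map_eq_zero sylvester).mpr
    fun _ hY => eq_zero_of_mul_eq_mul_of_isCoprime_charpoly hAB (sub_eq_zero.mp hY)
  exact LinearMap.injective_iff_surjective.mp hinj C

end Sylvester

section Blocks

variable {ι : Type*} [Fintype ι] [DecidableEq ι] {m' n' : ι → Type*} {o : Type*} {R : Type*}
  [NonUnitalNonAssocSemiring R]

theorem blockDiagonal'_mul_apply [∀ i, Fintype (n' i)] (D : ∀ i, Matrix (m' i) (n' i) R)
    (X : Matrix (Σ i, n' i) o R) (i : ι) (a : m' i) (k : o) :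
    (blockDiagonal' D * X) ⟨i, a⟩ k = ∑ c, D i a c * X ⟨i, c⟩ k := by
  rw [mul_apply, Fintype.sum_sigma, Fintype.sum_eq_single i]
  · simp only [blockDiagonal'_apply_eq]
  · intro j hj
    simp [blockDiagonal'_apply_ne D _ _ (Ne.symm hj)]

theorem mul_blockDiagonal'_apply [Fintype o] [∀ i, Fintype (m' i)]
    (D : ∀ i, Matrix (m' i) (n' i) R) (X : Matrix o (Σ i, m' i) R) (k : o) (j : ι) (b : n' j) :
    (X * blockDiagonal' D) k ⟨j, b⟩ = ∑ c, X k ⟨j, c⟩ * D j c b := by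
  rw [mul_apply, Fintype.sum_sigma, Fintype.sum_eq_single j]
  · simp only [blockDiagonal'_apply_eq]
  · intro i hi
    simp [blockDiagonal'_apply_ne D _ _ hi]

end Blocks

theorem exists_mul_sub_mul_add_eq_blockDiagonal' {ι : Type*} [Fintype ι] [DecidableEq ι]
    {n : ι → Type*} [∀ i, Fintype (n i)] [∀ i, DecidableEq (n i)] {K : Type*} [Field K]
    (D : ∀ i, Matrix (n i) (n i) K)
    (hD : Pairwise fun i j => IsCoprime (D i).charpoly (D j).charpoly)
    (C : Matrix (Σ i, n i) (Σ i, n i) K) :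
    ∃ (X : Matrix (Σ i, n i) (Σ i, n i) K) (H : ∀ i, Matrix (n i) (n i) K),
      blockDiagonal' D * X - X * blockDiagonal' D + C = blockDiagonal' H := by
  choose Y hY using fun i j (h : i ≠ j) =>
    exists_mul_sub_mul_eq_of_isCoprime_charpoly (hD h) (-of fun a b => C ⟨i, a⟩ ⟨j, b⟩)
  refine ⟨of fun x y => if h : x.1 = y.1 then 0 else Y x.1 y.1 h x.2 y.2,
    fun i => of fun a b => C ⟨i, a⟩ ⟨i, b⟩, ?_⟩
  ext ⟨i, a⟩ ⟨j, b⟩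
  rw [add_apply, sub_apply, blockDiagonal'_mul_apply, mul_blockDiagonal'_apply]
  by_cases h : i = j
  · subst h
    simp [blockDiagonal'_apply_eq]
  · have := congr($(hY i j h) a b)
    simp only [sub_apply, mul_apply, neg_apply, of_apply] at this
    simp [h, blockDiagonal'_apply_ne _ _ _ h, this]

end Matrix

section DualMatrix

variable {ι : Type*}

@[simp] lemma dmC_apply_fst (A B : Matrix ι ι ℂ) (i j : ι) : (dmC A B i j).fst = A i j := by
  simp [dmC]

@[simp] lemma dmC_apply_snd (A B : Matrix ι ι ℂ) (i j : ι) : (dmC A B i j).snd = B i j := by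
  simp [dmC]

lemma blockDiagonal'_dmC {κ : Type*} [DecidableEq κ] {n : κ → Type*}
    (D H : ∀ k, Matrix (n k) (n k) ℂ) :
    blockDiagonal' (fun k => dmC (D k) (H k)) = dmC (blockDiagonal' D) (blockDiagonal' H) := by
  ext ⟨i, a⟩ ⟨j, b⟩ <;> simp [blockDiagonal'_apply, apply_dite fst, apply_dite snd]

lemma dmC_one_zero [DecidableEq ι] : dmC (1 : Matrix ι ι ℂ) 0 = 1 := by
  ext i j <;> by_cases h : i = j <;> simp [one_apply, h]

variable [Fintype ι]

lemma dmC_mul (A B C D : Matrix ι ι ℂ) :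
    dmC A B * dmC C D = dmC (A * C) (A * D + B * C) := by
  ext i j
  · simp [mul_apply, fst_sum]
  · simp [mul_apply, snd_sum, Finset.sum_add_distrib]

variable [DecidableEq ι] {P Q : Matrix ι ι ℂ}

lemma dmC_mul_dmC_neg_eq_one (hPQ : P * Q = 1) (B : Matrix ι ι ℂ) :
    dmC P B * dmC Q (-(Q * B * Q)) = 1 := by
  rw [dmC_mul, hPQ, Matrix.mul_neg, ← Matrix.mul_assoc, ← Matrix.mul_assoc, hPQ, Matrix.one_mul,
    neg_add_cancel, dmC_one_zero]

lemma isUnit_dmC (hPQ : P * Q = 1) (B : Matrix ι ι ℂ) : IsUnit (dmC P B) :=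
  .of_mul_eq_one _ (dmC_mul_dmC_neg_eq_one hPQ B)

lemma inverse_dmC (hPQ : P * Q = 1) (B : Matrix ι ι ℂ) :
    Ring.inverse (dmC P B) = dmC Q (-(Q * B * Q)) := by
  simpa [dmC_mul_dmC_neg_eq_one hPQ] using
    Ring.inverse_mul_cancel_left _ (dmC Q (-(Q * B * Q))) (isUnit_dmC hPQ B)

lemma inverse_dmC_mul_dmC_mul_dmC (hQP : Q * P = 1) (A B X : Matrix ι ι ℂ) :
    Ring.inverse (dmC P (P * X)) * dmC A B * dmC P (P * X) =
      dmC (Q * A * P) (Q * A * P * X - X * (Q * A * P) + Q * B * P) := by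
  rw [inverse_dmC (mul_eq_one_comm.mp hQP), dmC_mul, dmC_mul, ← Matrix.mul_assoc Q P X, hQP,
    Matrix.one_mul]
  congr 1
  noncomm_ring

end DualMatrix

theorem stmt7_general {m : ℕ} (n : Fin m → ℕ)
    (As Ad Ps Q : Matrix ((i : Fin m) × Fin (n i)) ((i : Fin m) × Fin (n i)) ℂ)
    (hQ1 : Ps * Q = 1) (hQ2 : Q * Ps = 1)
    (D : (i : Fin m) → Matrix (Fin (n i)) (Fin (n i)) ℂ)
    (hD : Q * As * Ps = Matrix.blockDiagonal' D)
    (hSpec : ∀ i j : Fin m, i ≠ j → ∀ lam : ℂ,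
      ¬((D i).charpoly.IsRoot lam ∧ (D j).charpoly.IsRoot lam)) :
    ∃ (Pd : Matrix ((i : Fin m) × Fin (n i)) ((i : Fin m) × Fin (n i)) ℂ)
      (H : (i : Fin m) → Matrix (Fin (n i)) (Fin (n i)) ℂ),
      IsUnit (dmC Ps Pd) ∧
        Ring.inverse (dmC Ps Pd) * dmC As Ad * dmC Ps Pd =
          Matrix.blockDiagonal' (fun i => dmC (D i) (H i)) := by
  have hCoprime : Pairwise fun i j => IsCoprime (D i).charpoly (D j).charpoly :=
    fun i j hij => isCoprime_of_forall_not_isRoot (hSpec i j hij)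
  obtain ⟨X, H, hXH⟩ := exists_mul_sub_mul_add_eq_blockDiagonal' D hCoprime (Q * Ad * Ps)
  refine ⟨Ps * X, H, isUnit_dmC hQ1 _, ?_⟩
  rw [inverse_dmC_mul_dmC_mul_dmC hQ2, hD, hXH, blockDiagonal'_dmC]

theorem stmt7 {m : ℕ} (hm : 1 ≤ m) (n : Fin m → ℕ)
    (As Ad Ps Q : Matrix ((i : Fin m) × Fin (n i)) ((i : Fin m) × Fin (n i)) ℂ)
    (hQ1 : Ps * Q = 1) (hQ2 : Q * Ps = 1)
    (D : (i : Fin m) → Matrix (Fin (n i)) (Fin (n i)) ℂ)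
    (hD : Q * As * Ps = Matrix.blockDiagonal' D)
    (hSpec : ∀ i j : Fin m, i ≠ j → ∀ lam : ℂ,
      ¬((D i).charpoly.IsRoot lam ∧ (D j).charpoly.IsRoot lam)) :
    ∃ (Pd : Matrix ((i : Fin m) × Fin (n i)) ((i : Fin m) × Fin (n i)) ℂ)
      (H : (i : Fin m) → Matrix (Fin (n i)) (Fin (n i)) ℂ),
      IsUnit (dmC Ps Pd) ∧
        Ring.inverse (dmC Ps Pd) * dmC As Ad * dmC Ps Pd =
          Matrix.blockDiagonal' (fun i => dmC (D i) (H i)) :=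
  stmt7_general n As Ad Ps Q hQ1 hQ2 D hD hSpec
end

section
/- Let x_s, x_d, y_s, y_d : Fin n → ℍ be quaternion vectors with x_s ≠ 0 and x_s + y_s ≠ 0. Writing ⟨u, v⟩ = ∑ᵢ re(star(uᵢ)·vᵢ) for the real inner product and ‖·‖₂ for the Euclidean norm ‖u‖₂ = sqrt(∑ᵢ ‖uᵢ‖²), one has |⟨x_s + y_s, x_d + y_d⟩ / ‖x_s + y_s‖₂ − ⟨x_s, x_d⟩ / ‖x_s‖₂| ≤ ‖y_d‖₂ + 2·‖x_d‖₂·‖y_s‖₂ / ‖x_s + y_s‖₂. (This is the bound on the dual part of ‖x̂ + ŷ‖₂ − ‖x̂‖₂ for dual quaternion vectors x̂ = x_s + x_d·ε and ŷ = y_s + y_d·ε.) -/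
local notation "ℍ" => Quaternion ℝ

/-- The Euclidean 2-norm of a quaternion vector. -/
noncomputable def qnorm {n : ℕ} (u : Fin n → ℍ) : ℝ := Real.sqrt (∑ i, ‖u i‖ ^ 2)

/-- The real inner product of two quaternion vectors: `∑ i, re (uᵢ* · vᵢ)`. -/
noncomputable def qinner {n : ℕ} (u v : Fin n → ℍ) : ℝ := ∑ i, (star (u i) * v i).re

/-!
`qnorm` and `qinner` are the norm and real inner product of the `L²` space `PiLp 2 (fun _ => ℍ)`,
so the bound holds in any real inner product space. There, with `S = x + y`, the difference
`⟪S, d + e⟫ / ‖S‖ - ⟪x, d⟫ / ‖x‖` splits as `⟪S, e⟫ / ‖S‖ + ⟪y, d⟫ / ‖S‖` plus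
`(⟪x, d⟫ / ‖x‖) · (‖x‖ - ‖S‖) / ‖S‖`; Cauchy–Schwarz bounds the first two terms by `‖e‖` and
`‖d‖ ‖y‖ / ‖S‖`, and Cauchy–Schwarz with the reverse triangle inequality `|‖x‖ - ‖S‖| ≤ ‖y‖`
bounds the last by `‖d‖ ‖y‖ / ‖S‖`. The split also holds for `x = 0`, where the junk value
`⟪x, d⟫ / ‖x‖ = 0` still satisfies `⟪x, d⟫ / ‖x‖ * ‖x‖ = ⟪x, d⟫`.
-/

open scoped RealInnerProductSpace

section InnerProductSpace

variable {E : Type*} [NormedAddCommGroup E] [InnerProductSpace ℝ E]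

theorem abs_real_inner_div_norm_le (x y : E) : |⟪x, y⟫ / ‖x‖| ≤ ‖y‖ := by
  rcases eq_or_ne x 0 with rfl | hx
  · simp
  rw [abs_div, abs_norm, div_le_iff₀ (norm_pos_iff.mpr hx), mul_comm]
  exact abs_real_inner_le_norm x y

theorem real_inner_div_norm_mul_norm (x y : E) : ⟪x, y⟫ / ‖x‖ * ‖x‖ = ⟪x, y⟫ := by
  rcases eq_or_ne x 0 with rfl | hx
  · simp
  exact div_mul_cancel₀ _ (norm_ne_zero_iff.mpr hx)

theorem abs_real_inner_div_norm_add_sub_le (x d y e : E) (hxy : x + y ≠ 0) :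
    |⟪x + y, d + e⟫ / ‖x + y‖ - ⟪x, d⟫ / ‖x‖| ≤ ‖e‖ + 2 * ‖d‖ * ‖y‖ / ‖x + y‖ := by
  have hS : 0 < ‖x + y‖ := norm_pos_iff.mpr hxy
  have split : ⟪x + y, d + e⟫ / ‖x + y‖ - ⟪x, d⟫ / ‖x‖ =
      ⟪x + y, e⟫ / ‖x + y‖ + ⟪y, d⟫ / ‖x + y‖
        + ⟪x, d⟫ / ‖x‖ * ((‖x‖ - ‖x + y‖) / ‖x + y‖) := by
    rw [inner_add_right, inner_add_left, ← real_inner_div_norm_mul_norm x d]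
    field_simp
    ring
  have h_yd : |⟪y, d⟫ / ‖x + y‖| ≤ ‖d‖ * ‖y‖ / ‖x + y‖ := by
    rw [abs_div, abs_norm, real_inner_comm]
    exact div_le_div_of_nonneg_right (abs_real_inner_le_norm d y) hS.le
  have h_rescale : |⟪x, d⟫ / ‖x‖ * ((‖x‖ - ‖x + y‖) / ‖x + y‖)| ≤ ‖d‖ * (‖y‖ / ‖x + y‖) := by
    rw [abs_mul]
    gcongr
    · exact abs_real_inner_div_norm_le x d
    · rw [abs_div, abs_norm]
      gcongr
      simpa using abs_norm_sub_norm_le x (x + y)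
  rw [split]
  calc _ ≤ |⟪x + y, e⟫ / ‖x + y‖| + |⟪y, d⟫ / ‖x + y‖|
        + |⟪x, d⟫ / ‖x‖ * ((‖x‖ - ‖x + y‖) / ‖x + y‖)| := abs_add_three _ _ _
    _ ≤ ‖e‖ + ‖d‖ * ‖y‖ / ‖x + y‖ + ‖d‖ * (‖y‖ / ‖x + y‖) := by
        gcongr
        exact abs_real_inner_div_norm_le _ _
    _ = ‖e‖ + 2 * ‖d‖ * ‖y‖ / ‖x + y‖ := by ring

end InnerProductSpace

theorem qnorm_eq_norm_toLp {n : ℕ} (u : Fin n → ℍ) : qnorm u = ‖WithLp.toLp 2 u‖ := by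
  rw [qnorm, PiLp.norm_eq_of_L2]

theorem qinner_eq_inner_toLp {n : ℕ} (u v : Fin n → ℍ) :
    qinner u v = ⟪WithLp.toLp 2 u, WithLp.toLp 2 v⟫ := by
  simp [qinner, PiLp.inner_apply, Quaternion.inner_def, Quaternion.re_mul, mul_comm]

theorem stmt9_general {n : ℕ} (xs xd ys yd : Fin n → ℍ) (hxy : xs + ys ≠ 0) :
    |qinner (xs + ys) (xd + yd) / qnorm (xs + ys) - qinner xs xd / qnorm xs| ≤
      qnorm yd + 2 * qnorm xd * qnorm ys / qnorm (xs + ys) := by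
  simp only [qnorm_eq_norm_toLp, qinner_eq_inner_toLp, WithLp.toLp_add]
  exact abs_real_inner_div_norm_add_sub_le _ _ _ _ (by simpa [← WithLp.toLp_add] using hxy)

theorem stmt9 {n : ℕ} (xs xd ys yd : Fin n → ℍ) (hx : xs ≠ 0) (hxy : xs + ys ≠ 0) :
    |qinner (xs + ys) (xd + yd) / qnorm (xs + ys) - qinner xs xd / qnorm xs| ≤
      qnorm yd + 2 * qnorm xd * qnorm ys / qnorm (xs + ys) :=
  stmt9_general xs xd ys yd hxy
end

section
/- Let n₁, n₂ be natural numbers, λ_s, λ_d, r ∈ ℝ with 0 < r < |λ_s|, and set λ̂ = λ_s + λ_d·ε ∈ DualNumber ℝ, regarded as a central element of DualNumber ℍ, with inverse μ̂ = λ_s⁻¹ − (λ_s⁻¹·λ_d·λ_s⁻¹)·ε. Let J, H be n₂×n₂ quaternion matrices with J upper triangular and ‖J i i‖ ≤ r for every diagonal index i. Let P̂ be an invertible (n₁+n₂)×(n₁+n₂) matrix over DualNumber ℍ and define Â = P̂ · fromBlocks(λ̂·I_{n₁}, 0, 0, J + H·ε) · P̂⁻¹. Let η̂ : Fin n₁ ⊕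 Fin n₂ → DualNumber ℍ, let v̂⁰ = P̂.mulVec η̂, let η̂' agree with η̂ on the first summand and be 0 on the second, and let û = P̂.mulVec η̂'. Then there exist C > 0 and d ∈ ℕ such that for every k ≥ 1: ‖(fun i => ((Â^k).mulVec v̂⁰) i * μ̂^k) − û‖_{2^R} ≤ C · k^d · (r/|λ_s|)^k. (This is the core convergence estimate for the power method applied to a dual quaternion matrix with a strict dominant dual-number eigenvalue λ̂.) -/
local notation "ℍ" => Quaternion ℝ

/-- The `2^R`-norm of a dual quaternion vector:
`sqrt(‖standard part‖₂² + ‖dual part‖₂²)`. -/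
noncomputable def norm2R {ι : Type*} [Fintype ι] (x : ι → DualNumber ℍ) : ℝ :=
  Real.sqrt (∑ i, ‖(x i).fst‖ ^ 2 + ∑ i, ‖(x i).snd‖ ^ 2)

/-- A real number regarded as a quaternion. -/
noncomputable def rq (a : ℝ) : ℍ := algebraMap ℝ ℍ a

/-!
Norms: `‖q_s + q_d ε‖ = ‖q_s‖ + ‖q_d‖` on dual quaternions (submultiplicative), the sup norm on
vectors and the induced `ℓ∞` operator norm on matrices.

Conjugating by `P̂`, the residual is `P̂` applied to the vector whose first block vanishes
(`λ̂` is central with inverse `μ̂`) and whose second block is `Ĵ ^ k η̂₂ μ̂ ^ k`, `Ĵ = J + Hε`.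
Since `(Hε) X (Hε) = 0` for every `X`, `Ĵ ^ k = J ^ k + ∑ₘ J ^ m (Hε) J ^ (k - 1 - m)`, and
likewise for `μ̂ = λ_s⁻¹ + bε`; this reduces both factors to pure powers. The entries of the
triangular `J` are dominated by those of `r • 1 + N` with `N` real, strictly upper triangular and
hence nilpotent, so the binomial theorem gives `‖J ^ k‖ ≤ C (k + 1) ^ d r ^ k`. Bounds of this
shape are stable under sums, products and the convolution above.
-/

open Finset
open scoped Matrix Matrix.Norms.Operator

def PolyExpBounded (ρ : ℝ) (f : ℕ → ℝ) : Prop :=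
  ∃ C ≥ 0, ∃ d : ℕ, ∀ k, f k ≤ C * ((k : ℝ) + 1) ^ d * ρ ^ k

namespace PolyExpBounded

variable {ρ ρ' : ℝ} {f g : ℕ → ℝ}

theorem of_le (hg : PolyExpBounded ρ g) (hfg : ∀ k, f k ≤ g k) : PolyExpBounded ρ f := by
  obtain ⟨C, hC, d, h⟩ := hg
  exact ⟨C, hC, d, fun k => (hfg k).trans (h k)⟩

theorem pow : PolyExpBounded ρ (ρ ^ ·) :=
  ⟨1, zero_le_one, 0, fun k => by simp⟩

theorem const_mul {c : ℝ} (hc : 0 ≤ c) (hf : PolyExpBounded ρ f) :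
    PolyExpBounded ρ (fun k => c * f k) := by
  obtain ⟨C, hC, d, h⟩ := hf
  refine ⟨c * C, mul_nonneg hc hC, d, fun k => ?_⟩
  calc c * f k ≤ c * (C * ((k : ℝ) + 1) ^ d * ρ ^ k) := mul_le_mul_of_nonneg_left (h k) hc
    _ = c * C * ((k : ℝ) + 1) ^ d * ρ ^ k := by ring

private theorem bound_mono_degree (hρ : 0 ≤ ρ) {C : ℝ} (hC : 0 ≤ C) {d d' : ℕ} (hd : d ≤ d')
    (k : ℕ) :
    C * ((k : ℝ) + 1) ^ d * ρ ^ k ≤ C * ((k : ℝ) + 1) ^ d' * ρ ^ k := by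
  have : ((k : ℝ) + 1) ^ d ≤ ((k : ℝ) + 1) ^ d' :=
    pow_le_pow_right₀ (by linarith [(k.cast_nonneg : (0 : ℝ) ≤ k)]) hd
  gcongr

theorem add (hρ : 0 ≤ ρ) (hf : PolyExpBounded ρ f) (hg : PolyExpBounded ρ g) :
    PolyExpBounded ρ (f + g) := by
  obtain ⟨C, hC, d, h⟩ := hf
  obtain ⟨C', hC', d', h'⟩ := hg
  refine ⟨C + C', add_nonneg hC hC', d + d', fun k => ?_⟩
  calc f k + g k ≤ C * ((k : ℝ) + 1) ^ (d + d') * ρ ^ k + C' * ((k : ℝ) + 1) ^ (d + d') * ρ ^ k :=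
        add_le_add ((h k).trans (bound_mono_degree hρ hC (by omega) k))
          ((h' k).trans (bound_mono_degree hρ hC' (by omega) k))
    _ = (C + C') * ((k : ℝ) + 1) ^ (d + d') * ρ ^ k := by ring

theorem sum (hρ : 0 ≤ ρ) {ι : Type*} (s : Finset ι) {F : ι → ℕ → ℝ}
    (hF : ∀ i ∈ s, PolyExpBounded ρ (F i)) : PolyExpBounded ρ (fun k => ∑ i ∈ s, F i k) := by
  classical
  induction s using Finset.induction with
  | empty => exact ⟨0, le_rfl, 0, fun k => by simp⟩
  | insert i s hi ih =>
    simp only [Finset.sum_insert hi]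
    exact (hF i (mem_insert_self i s)).add hρ (ih fun j hj => hF j (mem_insert_of_mem hj))

theorem mul (hf0 : ∀ k, 0 ≤ f k) (hg0 : ∀ k, 0 ≤ g k) (hf : PolyExpBounded ρ f)
    (hg : PolyExpBounded ρ' g) : PolyExpBounded (ρ * ρ') (fun k => f k * g k) := by
  obtain ⟨C, hC, d, h⟩ := hf
  obtain ⟨C', hC', d', h'⟩ := hg
  refine ⟨C * C', mul_nonneg hC hC', d + d', fun k => ?_⟩
  calc f k * g k ≤ (C * ((k : ℝ) + 1) ^ d * ρ ^ k) * (C' * ((k : ℝ) + 1) ^ d' * ρ' ^ k) :=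
        mul_le_mul (h k) (h' k) (hg0 k) ((hf0 k).trans (h k))
    _ = C * C' * ((k : ℝ) + 1) ^ (d + d') * (ρ * ρ') ^ k := by ring

private theorem le_bound_of_le {C : ℝ} {d : ℕ} (h : ∀ k, f k ≤ C * ((k : ℝ) + 1) ^ d * ρ ^ k)
    (hC : 0 ≤ C) (hρ : 0 ≤ ρ) {m n : ℕ} (hmn : m ≤ n) : f m ≤ C * ((n : ℝ) + 1) ^ d * ρ ^ m :=
  (h m).trans (by gcongr)

theorem conv (hρ : 0 < ρ) (hf0 : ∀ k, 0 ≤ f k) (hg0 : ∀ k, 0 ≤ g k) (hf : PolyExpBounded ρ f)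
    (hg : PolyExpBounded ρ g) :
    PolyExpBounded ρ (fun k => ∑ m ∈ range k, f m * g (k - 1 - m)) := by
  obtain ⟨C, hC, d, h⟩ := hf
  obtain ⟨C', hC', d', h'⟩ := hg
  refine ⟨C * C' / ρ, div_nonneg (mul_nonneg hC hC') hρ.le, d + d' + 1, fun k => ?_⟩
  have hterm : ∀ m ∈ range k,
      f m * g (k - 1 - m) ≤ C * C' / ρ * ((k : ℝ) + 1) ^ (d + d') * ρ ^ k := by
    intro m hm
    have hmk := mem_range.mp hm
    have hfm := le_bound_of_le h hC hρ.le hmk.le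
    have hρk : ρ ^ m * ρ ^ (k - 1 - m) = ρ ^ k / ρ := by
      rw [← pow_add, eq_div_iff hρ.ne', ← pow_succ]
      congr 1
      omega
    calc f m * g (k - 1 - m)
        ≤ (C * ((k : ℝ) + 1) ^ d * ρ ^ m) * (C' * ((k : ℝ) + 1) ^ d' * ρ ^ (k - 1 - m)) :=
          mul_le_mul hfm (le_bound_of_le h' hC' hρ.le (by omega)) (hg0 _) ((hf0 m).trans hfm)
      _ = C * C' / ρ * ((k : ℝ) + 1) ^ (d + d') * ρ ^ k := by
          rw [mul_mul_mul_comm, mul_mul_mul_comm C, hρk]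
          ring
  calc ∑ m ∈ range k, f m * g (k - 1 - m)
      ≤ k * (C * C' / ρ * ((k : ℝ) + 1) ^ (d + d') * ρ ^ k) := by
        simpa using sum_le_sum hterm
    _ ≤ ((k : ℝ) + 1) * (C * C' / ρ * ((k : ℝ) + 1) ^ (d + d') * ρ ^ k) := by
        gcongr
        linarith
    _ = C * C' / ρ * ((k : ℝ) + 1) ^ (d + d' + 1) * ρ ^ k := by ring

theorem exists_pos_bound (hρ : 0 ≤ ρ) (hf : PolyExpBounded ρ f) :
    ∃ C > (0 : ℝ), ∃ d : ℕ, ∀ k : ℕ, 1 ≤ k → f k ≤ C * (k : ℝ) ^ d * ρ ^ k := by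
  obtain ⟨C, hC, d, h⟩ := hf
  refine ⟨C * 2 ^ d + 1, by positivity, d, fun k hk => (h k).trans ?_⟩
  have hk : (1 : ℝ) ≤ k := by exact_mod_cast hk
  calc C * ((k : ℝ) + 1) ^ d * ρ ^ k ≤ C * (2 * k) ^ d * ρ ^ k := by gcongr; linarith
    _ = C * 2 ^ d * (k : ℝ) ^ d * ρ ^ k := by ring
    _ ≤ (C * 2 ^ d + 1) * (k : ℝ) ^ d * ρ ^ k := by gcongr; linarith

end PolyExpBounded

theorem polyExpBounded_choose_mul_pow {r : ℝ} (hr : 0 < r) (m : ℕ) :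
    PolyExpBounded r (fun k => k.choose m * r ^ (k - m)) := by
  refine ⟨r⁻¹ ^ m, by positivity, m, fun k => ?_⟩
  rcases le_or_gt m k with hmk | hkm
  · have hchoose : (k.choose m : ℝ) ≤ ((k : ℝ) + 1) ^ m := by
      calc (k.choose m : ℝ) ≤ (k : ℝ) ^ m := by exact_mod_cast Nat.choose_le_pow k m
        _ ≤ ((k : ℝ) + 1) ^ m := by gcongr; linarith
    calc (k.choose m : ℝ) * r ^ (k - m) ≤ ((k : ℝ) + 1) ^ m * r ^ (k - m) := by gcongr
      _ = r⁻¹ ^ m * ((k : ℝ) + 1) ^ m * r ^ k := by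
        have hr1 : r⁻¹ ^ m * r ^ m = 1 := by rw [← mul_pow, inv_mul_cancel₀ hr.ne', one_pow]
        rw [← pow_sub_mul_pow r hmk]
        linear_combination (-((k : ℝ) + 1) ^ m * r ^ (k - m)) * hr1
  · dsimp only
    rw [Nat.choose_eq_zero_of_lt hkm]
    simp only [Nat.cast_zero, zero_mul]
    positivity

theorem add_pow_of_mul_mul_eq_zero {R : Type*} [Ring R] {a b : R} (hb : ∀ x, b * x * b = 0)
    (k : ℕ) : (a + b) ^ k = a ^ k + ∑ m ∈ range k, a ^ m * b * a ^ (k - 1 - m) := by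
  induction k with
  | zero => simp
  | succ k ih =>
    have hshift : ∀ m ∈ range k, a ^ m * b * a ^ (k - m) = a ^ m * b * a ^ (k - 1 - m) * a := by
      intro m hm
      rw [mul_assoc _ _ a, ← pow_succ]
      congr 2
      have := mem_range.mp hm
      omega
    have hsum_mul : (∑ m ∈ range k, a ^ m * b * a ^ (k - 1 - m)) * b = 0 := by
      rw [sum_mul]
      exact sum_eq_zero fun m _ => by rw [mul_assoc, mul_assoc, ← mul_assoc b, hb, mul_zero]
    simp only [Nat.add_sub_cancel]
    rw [pow_succ, ih, sum_range_succ, Nat.sub_self, pow_zero, mul_one, sum_congr rfl hshift,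
      ← sum_mul, mul_add, add_mul, add_mul, hsum_mul, pow_succ]
    abel

theorem PolyExpBounded.norm_add_pow {R : Type*} [SeminormedRing R] {a b : R}
    (hb : ∀ x, b * x * b = 0) {ρ : ℝ} (hρ : 0 < ρ) (ha : PolyExpBounded ρ (‖a ^ ·‖)) :
    PolyExpBounded ρ (‖(a + b) ^ ·‖) := by
  have hconv : PolyExpBounded ρ fun k => ∑ m ∈ range k, ‖b‖ * ‖a ^ m‖ * ‖a ^ (k - 1 - m)‖ :=
    (ha.const_mul (norm_nonneg b)).conv hρ (fun _ => by positivity) (fun _ => norm_nonneg _) ha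
  refine (ha.add hρ.le hconv).of_le fun k => ?_
  rw [add_pow_of_mul_mul_eq_zero hb, Pi.add_apply]
  refine (norm_add_le _ _).trans (add_le_add_right ((norm_sum_le _ _).trans ?_) _)
  gcongr with m
  calc ‖a ^ m * b * a ^ (k - 1 - m)‖ ≤ ‖a ^ m‖ * ‖b‖ * ‖a ^ (k - 1 - m)‖ := norm_mul₃_le
    _ = ‖b‖ * ‖a ^ m‖ * ‖a ^ (k - 1 - m)‖ := by ring

namespace Matrix

variable {ι : Type*} [Fintype ι]

theorem norm_pow_apply_le_of_norm_apply_le {R : Type*} [SeminormedRing R] [NormOneClass R]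
    [DecidableEq ι] {A : Matrix ι ι R} {B : Matrix ι ι ℝ} (hAB : ∀ i j, ‖A i j‖ ≤ B i j) (k : ℕ)
    (i j : ι) : ‖(A ^ k) i j‖ ≤ (B ^ k) i j := by
  induction k generalizing j with
  | zero => rcases eq_or_ne i j with rfl | hij <;> simp [*]
  | succ k ih =>
    rw [pow_succ, pow_succ, mul_apply, mul_apply]
    refine (norm_sum_le _ _).trans (sum_le_sum fun l _ => (norm_mul_le _ _).trans ?_)
    exact mul_le_mul (ih l) (hAB l j) (norm_nonneg _) ((norm_nonneg _).trans (ih l))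

theorem pow_card_eq_zero_of_strictlyUpperTriangular {R : Type*} [CommRing R] [LinearOrder ι]
    {N : Matrix ι ι R} (hN : ∀ i j, j ≤ i → N i j = 0) : N ^ Fintype.card ι = 0 := by
  have hchar : N.charpoly = Polynomial.X ^ Fintype.card ι := by
    rw [charpoly_of_isUpperTriangular N fun i j h => hN i j h.le]
    simp [hN _ _ le_rfl]
  simpa [hchar] using aeval_self_charpoly N

theorem linfty_opNorm_le_of_norm_apply_le {κ α β : Type*} [Fintype κ]
    [SeminormedAddCommGroup α] [SeminormedAddCommGroup β] {A : Matrix ι κ α} {B : Matrix ι κ β}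
    (h : ∀ i j, ‖A i j‖ ≤ ‖B i j‖) : ‖A‖ ≤ ‖B‖ := by
  rw [linfty_opNorm_def, linfty_opNorm_def, NNReal.coe_le_coe]
  exact Finset.sup_mono_fun fun i _ => sum_le_sum fun j _ => h i j

end Matrix

theorem norm_add_algebraMap_pow_le {A : Type*} [SeminormedRing A] [NormedAlgebra ℝ A] {N : A}
    {n : ℕ} (hN : N ^ n = 0) {r : ℝ} (hr : 0 ≤ r) (k : ℕ) :
    ‖(N + algebraMap ℝ A r) ^ k‖ ≤ ∑ m ∈ range n, ‖N ^ m‖ * (k.choose m * r ^ (k - m)) := by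
  set g : ℕ → ℝ := fun m => ‖N ^ m‖ * (k.choose m * r ^ (k - m))
  have hg0 : ∀ m, 0 ≤ g m := fun m => by positivity
  have hgn : ∀ m, n ≤ m → g m = 0 := fun m hm => by
    obtain ⟨j, rfl⟩ := Nat.exists_eq_add_of_le hm
    simp [g, pow_add, hN]
  have hterm : ∀ m, N ^ m * algebraMap ℝ A r ^ (k - m) * (k.choose m : A)
      = ((k.choose m : ℝ) * r ^ (k - m)) • N ^ m := fun m => by
    rw [← map_pow, ← map_natCast (algebraMap ℝ A), mul_assoc, ← map_mul, ← Algebra.commutes,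
      ← Algebra.smul_def, mul_comm]
  calc ‖(N + algebraMap ℝ A r) ^ k‖ ≤ ∑ m ∈ range (k + 1), g m := by
        rw [(Algebra.commute_algebraMap_right r N).add_pow]
        refine (norm_sum_le _ _).trans (sum_le_sum fun m _ => ?_)
        rw [hterm]
        refine (norm_smul_le _ _).trans_eq ?_
        rw [Real.norm_of_nonneg (by positivity), mul_comm]
    _ = ∑ m ∈ range (k + 1) ∩ range n, g m :=
        (sum_subset inter_subset_left fun m hk hn => hgn m (by simp_all)).symm
    _ ≤ ∑ m ∈ range n, g m := sum_le_sum_of_subset_of_nonneg inter_subset_right fun m _ _ => hg0 m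

theorem Matrix.IsUpperTriangular.polyExpBounded_norm_pow {ι R : Type*} [Fintype ι] [LinearOrder ι]
    [SeminormedRing R] [NormOneClass R] {A : Matrix ι ι R} (hA : A.IsUpperTriangular) {r : ℝ}
    (hr : 0 < r) (hdiag : ∀ i, ‖A i i‖ ≤ r) : PolyExpBounded r (‖A ^ ·‖) := by
  set N : Matrix ι ι ℝ := of fun i j => if i < j then ‖A i j‖ else 0
  have hN : N ^ Fintype.card ι = 0 :=
    pow_card_eq_zero_of_strictlyUpperTriangular fun i j h => by simp [N, not_lt.mpr h]
  have hdom : ∀ i j, ‖A i j‖ ≤ (N + algebraMap ℝ _ r) i j := by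
    intro i j
    rcases lt_trichotomy i j with h | rfl | h
    · simp [N, h, algebraMap_matrix_apply, h.ne]
    · simpa [N, algebraMap_matrix_apply] using hdiag i
    · simp [N, h.not_gt, hA h, algebraMap_matrix_apply, h.ne']
  have hbound : ∀ k, ‖A ^ k‖ ≤
      ∑ m ∈ range (Fintype.card ι), ‖N ^ m‖ * (k.choose m * r ^ (k - m)) := fun k =>
    (linfty_opNorm_le_of_norm_apply_le fun i j =>
      (norm_pow_apply_le_of_norm_apply_le hdom k i j).trans (Real.le_norm_self _)).trans
      (norm_add_algebraMap_pow_le hN hr.le k)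
  exact (PolyExpBounded.sum hr.le _ fun m _ =>
    (polyExpBounded_choose_mul_pow hr m).const_mul (norm_nonneg _)).of_le hbound

open TrivSqZeroExt

theorem TrivSqZeroExt.inr_mul_mul_inr {R M : Type*} [Semiring R] [AddCommMonoid M] [Module R M]
    [Module Rᵐᵒᵖ M] (m : M) (x : TrivSqZeroExt R M) (m' : M) : inr m * x * inr m' = 0 := by
  refine TrivSqZeroExt.ext ?_ ?_ <;> simp

theorem Matrix.map_inr_mul_mul_map_inr {ι R M : Type*} [Fintype ι] [Semiring R] [AddCommMonoid M]
    [Module R M] [Module Rᵐᵒᵖ M] (H : Matrix ι ι M) (X : Matrix ι ι (TrivSqZeroExt R M)) :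
    H.map inr * X * H.map inr = 0 := by
  refine Matrix.ext fun i j => ?_
  simp [Matrix.mul_apply, sum_mul, inr_mul_mul_inr]

theorem inl_rq_add_inr_rq (a b : ℝ) : (inl (rq a) + inr (rq b) : DualNumber ℍ)
    = algebraMap ℝ _ a + algebraMap ℝ _ b * DualNumber.eps := by
  rw [algebraMap_eq_inl', algebraMap_eq_inl', DualNumber.eps, inl_mul_inr, smul_eq_mul, mul_one]
  rfl

theorem commute_inl_rq_add_inr_rq (a b : ℝ) (x : DualNumber ℍ) :
    Commute (inl (rq a) + inr (rq b)) x := by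
  rw [inl_rq_add_inr_rq]
  exact (Algebra.commute_algebraMap_left a x).add_left
    ((Algebra.commute_algebraMap_left b x).mul_left (DualNumber.commute_eps_left x))

theorem inl_rq_add_inr_rq_mul_inv {a : ℝ} (ha : a ≠ 0) (b : ℝ) :
    (inl (rq a) + inr (rq b) : DualNumber ℍ) * (inl (rq a⁻¹) + inr (-rq (a⁻¹ * b * a⁻¹))) = 1 := by
  refine TrivSqZeroExt.ext ?_ ?_
  · simp only [fst_mul, fst_add, fst_inl, fst_inr, add_zero, fst_one, rq, ← map_mul,
      mul_inv_cancel₀ ha, map_one]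
  · simp only [snd_mul, fst_add, snd_add, fst_inl, fst_inr, snd_inl, snd_inr, add_zero, zero_add,
      snd_one, smul_eq_mul, MulOpposite.smul_eq_mul_unop, MulOpposite.unop_op, rq, ← map_neg,
      ← map_mul, ← map_add]
    convert map_zero (algebraMap ℝ ℍ)
    field_simp
    ring

theorem polyExpBounded_norm_inl_rq_add_inr_pow {a : ℝ} (ha : a ≠ 0) (b : ℍ) :
    PolyExpBounded |a| (‖(inl (rq a) + inr b : DualNumber ℍ) ^ ·‖) :=
  PolyExpBounded.norm_add_pow (fun x => inr_mul_mul_inr _ x _) (abs_pos.2 ha)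
    (PolyExpBounded.pow.of_le fun k => by
      rw [inl_pow, norm_inl, norm_pow, rq, Quaternion.algebraMap_def, Quaternion.norm_coe,
        Real.norm_eq_abs])

theorem polyExpBounded_norm_dm_pow {n : Type*} [Fintype n] [LinearOrder n] {J : Matrix n n ℍ}
    (hJ : J.IsUpperTriangular) (H : Matrix n n ℍ) {r : ℝ} (hr : 0 < r)
    (hdiag : ∀ i, ‖J i i‖ ≤ r) : PolyExpBounded r (‖dm J H ^ ·‖) :=
  PolyExpBounded.norm_add_pow (Matrix.map_inr_mul_mul_map_inr H) hr
    (Matrix.IsUpperTriangular.polyExpBounded_norm_pow (fun i j h => by simp [hJ h]) hr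
      fun i => by simpa using hdiag i)

namespace Matrix

theorem mulVec_mul_const {R m n : Type*} [Ring R] [Fintype n] (P : Matrix m n R) (y : n → R)
    (c : R) : (fun i => (P *ᵥ y) i * c) = P *ᵥ fun j => y j * c :=
  (mulVec_smul P (MulOpposite.op c) y).symm

variable {R m n : Type*} [Ring R] [Fintype m] [Fintype n] [DecidableEq m] [DecidableEq n]

theorem fromBlocks_zero₁₂_zero₂₁_pow (A : Matrix m m R) (B : Matrix n n R) (k : ℕ) :
    fromBlocks A 0 0 B ^ k = fromBlocks (A ^ k) 0 0 (B ^ k) := by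
  induction k with
  | zero => simp [fromBlocks_one]
  | succ k ih => simp [pow_succ, ih, fromBlocks_multiply]

theorem conj_fromBlocks_pow_mulVec_mul_pow_sub (P Pinv : Matrix (m ⊕ n) (m ⊕ n) R)
    (hP1 : P * Pinv = 1) (hP2 : Pinv * P = 1) {lam mu : R} (hlam : ∀ x, Commute lam x)
    (hmu : lam * mu = 1) (B : Matrix n n R) (η : m ⊕ n → R) (k : ℕ) :
    (fun i => ((P * fromBlocks (lam • (1 : Matrix m m R)) 0 0 B * Pinv) ^ k *ᵥ (P *ᵥ η)) i * mu ^ k)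
        - P *ᵥ Sum.elim (fun i => η (Sum.inl i)) (fun _ => 0)
      = P *ᵥ Sum.elim 0 (fun j => (B ^ k *ᵥ fun j => η (Sum.inr j)) j * mu ^ k) := by
  let u : (Matrix (m ⊕ n) (m ⊕ n) R)ˣ := ⟨P, Pinv, hP1, hP2⟩
  have hconj := u.conj_pow (fromBlocks (lam • (1 : Matrix m m R)) 0 0 B) k
  simp only [u, Units.inv_mk, Units.val_mk] at hconj
  have hcancel : ∀ x : R, lam ^ k * x * mu ^ k = x := fun x => by
    rw [((hlam x).pow_left k).eq, mul_assoc, ← (hlam mu).mul_pow, hmu, one_pow, mul_one]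
  rw [hconj, mulVec_mulVec, mul_assoc _ Pinv, hP2, mul_one, ← mulVec_mulVec, mulVec_mul_const,
    ← mulVec_sub, fromBlocks_zero₁₂_zero₂₁_pow, smul_one_eq_diagonal, diagonal_pow,
    fromBlocks_mulVec]
  congr 1
  ext (i | j)
  · simp [mulVec_diagonal, hcancel]
  · simp only [Pi.sub_apply, Sum.elim_inr, zero_mulVec, zero_add, sub_zero]
    rfl

end Matrix

theorem norm2R_le_sqrt_card_mul_norm {ι : Type*} [Fintype ι] (x : ι → DualNumber ℍ) :
    norm2R x ≤ Real.sqrt (Fintype.card ι) * ‖x‖ := by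
  rw [norm2R, ← Real.sqrt_sq (norm_nonneg x), ← Real.sqrt_mul (Nat.cast_nonneg _)]
  refine Real.sqrt_le_sqrt ?_
  rw [← sum_add_distrib]
  calc ∑ i, (‖(x i).fst‖ ^ 2 + ‖(x i).snd‖ ^ 2) ≤ ∑ _i, ‖x‖ ^ 2 := sum_le_sum fun i _ => by
        have hx := norm_le_pi_norm x i
        rw [TrivSqZeroExt.norm_def] at hx
        nlinarith [norm_nonneg (x i).fst, norm_nonneg (x i).snd]
    _ = Fintype.card ι * ‖x‖ ^ 2 := by simp

theorem norm2R_mulVec_sum_elim_zero_le {m n : Type*} [Fintype m] [Fintype n]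
    (P : Matrix (m ⊕ n) (m ⊕ n) (DualNumber ℍ)) (B : Matrix n n (DualNumber ℍ))
    (y : n → DualNumber ℍ) (c : DualNumber ℍ) :
    norm2R (P *ᵥ Sum.elim 0 fun j => (B *ᵥ y) j * c)
      ≤ Real.sqrt (Fintype.card (m ⊕ n)) * ‖P‖ * ‖y‖ * (‖B‖ * ‖c‖) := by
  have hw : ‖(Sum.elim 0 fun j => (B *ᵥ y) j * c : m ⊕ n → DualNumber ℍ)‖ ≤ ‖B‖ * ‖y‖ * ‖c‖ := by
    refine (pi_norm_le_iff_of_nonneg (by positivity)).2 fun i => ?_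
    rcases i with i | j
    · simp only [Sum.elim_inl, Pi.zero_apply, norm_zero]
      positivity
    · exact (norm_mul_le _ _).trans (by
        gcongr
        exact (norm_le_pi_norm _ j).trans (Matrix.linfty_opNorm_mulVec B y))
  calc norm2R (P *ᵥ Sum.elim 0 fun j => (B *ᵥ y) j * c)
      ≤ Real.sqrt (Fintype.card (m ⊕ n)) * (‖P‖ * (‖B‖ * ‖y‖ * ‖c‖)) := by
        refine (norm2R_le_sqrt_card_mul_norm _).trans ?_
        gcongr
        exact (Matrix.linfty_opNorm_mulVec P _).trans (by gcongr)
    _ = Real.sqrt (Fintype.card (m ⊕ n)) * ‖P‖ * ‖y‖ * (‖B‖ * ‖c‖) := by ring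

theorem PolyExpBounded.norm2R_mulVec_sum_elim_zero {m n : Type*} [Fintype m] [Fintype n]
    [DecidableEq n]
    (P : Matrix (m ⊕ n) (m ⊕ n) (DualNumber ℍ)) {B : Matrix n n (DualNumber ℍ)}
    (y : n → DualNumber ℍ) {c : DualNumber ℍ} {ρ ρ' : ℝ} (hB : PolyExpBounded ρ (‖B ^ ·‖))
    (hc : PolyExpBounded ρ' (‖c ^ ·‖)) :
    PolyExpBounded (ρ * ρ') fun k => norm2R (P *ᵥ Sum.elim 0 fun j => (B ^ k *ᵥ y) j * c ^ k) :=
  ((hB.mul (fun _ => norm_nonneg _) (fun _ => norm_nonneg _) hc).const_mul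
    (by positivity)).of_le fun k => norm2R_mulVec_sum_elim_zero_le P _ y _

theorem stmt12 {n₁ n₂ : ℕ} (lams lamd r : ℝ) (hr : 0 < r) (hrs : r < |lams|)
    (J H : Matrix (Fin n₂) (Fin n₂) ℍ)
    (hJtri : ∀ i j : Fin n₂, (j : ℕ) < (i : ℕ) → J i j = 0)
    (hJdiag : ∀ i, ‖J i i‖ ≤ r)
    (P Pinv : Matrix (Fin n₁ ⊕ Fin n₂) (Fin n₁ ⊕ Fin n₂) (DualNumber ℍ))
    (hP1 : P * Pinv = 1) (hP2 : Pinv * P = 1)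
    (η : Fin n₁ ⊕ Fin n₂ → DualNumber ℍ) :
    ∃ C > (0 : ℝ), ∃ d : ℕ, ∀ k : ℕ, 1 ≤ k →
      norm2R
        ((fun i =>
            (((P * Matrix.fromBlocks
                  ((TrivSqZeroExt.inl (rq lams) + TrivSqZeroExt.inr (rq lamd) : DualNumber ℍ) •
                    (1 : Matrix (Fin n₁) (Fin n₁) (DualNumber ℍ)))
                  0 0 (dm J H) * Pinv) ^ k).mulVec (P.mulVec η)) i *
              (TrivSqZeroExt.inl (rq lams⁻¹) +
                TrivSqZeroExt.inr (-rq (lams⁻¹ * lamd * lams⁻¹)) : DualNumber ℍ) ^ k) -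
          P.mulVec (Sum.elim (fun i => η (Sum.inl i)) fun _ => 0)) ≤
        C * (k : ℝ) ^ d * (r / |lams|) ^ k := by
  have hlams : lams ≠ 0 := abs_pos.mp (hr.trans hrs)
  obtain ⟨C, hC, d, hbound⟩ :=
    ((polyExpBounded_norm_dm_pow (fun i j h => hJtri i j h) H hr hJdiag).norm2R_mulVec_sum_elim_zero
      P (fun j => η (Sum.inr j))
      (polyExpBounded_norm_inl_rq_add_inr_pow (inv_ne_zero hlams) _)).exists_pos_bound
      (by positivity)
  refine ⟨C, hC, d, fun k hk => ?_⟩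
  rw [Matrix.conj_fromBlocks_pow_mulVec_mul_pow_sub P Pinv hP1 hP2
    (commute_inl_rq_add_inr_rq lams lamd) (inl_rq_add_inr_rq_mul_inv hlams lamd), div_eq_mul_inv,
    ← abs_inv]
  exact hbound k hk
end

section
/- Let Q̂ be an n×n dual quaternion matrix and write Q̂ = (A₁ + A₂·j) + (A₃ + A₄·j)·ε with A₁, A₂, A₃, A₄ complex n×n matrices; define its dual complex adjoint matrix 𝒥(Q̂) = [[A₁, A₂], [−conj(A₂), conj(A₁)]] + [[A₃, A₄], [−conj(A₄), conj(A₃)]]·ε, a 2n×2n matrix over DualNumber ℂ. For a dual quaternion vector v̂ = (v₁ + v₂·j) + (v₃ + v₄·j)·ε (v₁,…,v₄ complex vectors) define ℱ(v̂) = (v₁; −conj(v₂)) + (v₃; −conj(v₄))·ε ∈ (DualNumber ℂ)^{2n}. Then for every λ̂ ∈ DualNumber ℂ (regarded on the right as a dual quaternion): Q̂.mulVec v̂ = (fun i => v̂ i * λ̂) if and only if [𝒥(Q̂).mulVec ℱ(v̂) = λ̂ • ℱ(v̂) or 𝒥(Q̂).mulVec ℱ(v̂·j) = conj(λ̂) •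 ℱ(v̂·j)], where v̂·j denotes componentwise right multiplication by j and conj on DualNumber ℂ conjugates both parts. Moreover ℱ(v̂) and ℱ(v̂·j) are orthogonal: ∑ᵢ conj(ℱ(v̂)ᵢ)·ℱ(v̂·j)ᵢ = 0 in DualNumber ℂ. -/
local notation "ℍ" => Quaternion ℝ

/-- The complex adjoint of a quaternion matrix. -/
noncomputable def chiQ {n : ℕ} (M : Matrix (Fin n) (Fin n) ℍ) :
    Matrix (Fin n ⊕ Fin n) (Fin n ⊕ Fin n) ℂ :=
  Matrix.fromBlocks (M.map c1) (M.map c2)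
    (-(M.map fun q => starRingEnd ℂ (c2 q))) (M.map fun q => starRingEnd ℂ (c1 q))

/-- The dual complex adjoint matrix `𝒥(Q̂)` of a dual quaternion matrix. -/
noncomputable def JQ {n : ℕ} (Q : Matrix (Fin n) (Fin n) (DualNumber ℍ)) :
    Matrix (Fin n ⊕ Fin n) (Fin n ⊕ Fin n) (DualNumber ℂ) :=
  dmC (chiQ (Matrix.of fun i j => (Q i j).fst)) (chiQ (Matrix.of fun i j => (Q i j).snd))

/-- The map `ℱ` from dual quaternion vectors to dual complex vectors of doubled length. -/
noncomputable def Fv {n : ℕ} (v : Fin n → DualNumber ℍ) : Fin n ⊕ Fin n → DualNumber ℂ :=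
  Sum.elim
    (fun i => TrivSqZeroExt.inl (c1 (v i).fst) + TrivSqZeroExt.inr (c1 (v i).snd))
    (fun i => TrivSqZeroExt.inl (-(starRingEnd ℂ (c2 (v i).fst))) +
      TrivSqZeroExt.inr (-(starRingEnd ℂ (c2 (v i).snd))))

/-- The quaternion unit `j`. -/
noncomputable def jq : ℍ := ⟨0, 0, 1, 0⟩

/-- Componentwise right multiplication of a dual quaternion vector by `j`. -/
noncomputable def vmulj {n : ℕ} (v : Fin n → DualNumber ℍ) : Fin n → DualNumber ℍ :=
  fun i => v i * TrivSqZeroExt.inl jq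

/-- Conjugation on dual complex numbers, conjugating both parts. -/
noncomputable def dconj (z : DualNumber ℂ) : DualNumber ℂ :=
  TrivSqZeroExt.inl (starRingEnd ℂ z.fst) + TrivSqZeroExt.inr (starRingEnd ℂ z.snd)

/-- A dual complex number regarded as a dual quaternion. -/
noncomputable def toDQ (z : DualNumber ℂ) : DualNumber ℍ :=
  TrivSqZeroExt.inl (⟨z.fst.re, z.fst.im, 0, 0⟩ : ℍ) +
    TrivSqZeroExt.inr (⟨z.snd.re, z.snd.im, 0, 0⟩ : ℍ)

/-!
Writing a dual quaternion as `x = dc1 x + dc2 x • j` with dual complex `dc1 x`, `dc2 x`, the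
rule `j z = conj z j` gives `dc1 (x y) = dc1 x dc1 y - dc2 x conj (dc2 y)` and
`dc2 (x y) = dc1 x dc2 y + dc2 x conj (dc1 y)`. These say that `Fv v = (dc1 v; -conj (dc2 v))`
intertwines `Q` with `JQ Q` and turns right multiplication by a dual complex `λ` into scaling
by `λ`; as `Fv` is injective, `Q v = v λ` iff `JQ Q (Fv v) = λ Fv v`. Right multiplication by
the unit `j` maps eigenpairs `(v, λ)` to `(v j, conj λ)` since `λ j = j conj λ`, so both
disjuncts are equivalent to `Q v = v λ`. Orthogonality is the identity
`conj a (-b) + conj (-conj b) (-conj a) = 0` for `Fv (v j) = (-dc2 v; -conj (dc1 v))`.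
-/

open TrivSqZeroExt ComplexConjugate

lemma c1_zero : c1 0 = 0 := rfl
lemma c2_zero : c2 0 = 0 := rfl
lemma c1_one : c1 1 = 1 := rfl
lemma c2_one : c2 1 = 0 := rfl
lemma c1_jq : c1 jq = 0 := rfl
lemma c2_jq : c2 jq = 1 := rfl

lemma c1_add (p q : ℍ) : c1 (p + q) = c1 p + c1 q := by apply Complex.ext <;> simp [c1]

lemma c2_add (p q : ℍ) : c2 (p + q) = c2 p + c2 q := by apply Complex.ext <;> simp [c2]

lemma c1_mul (p q : ℍ) : c1 (p * q) = c1 p * c1 q - c2 p * conj (c2 q) := by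
  simp only [c1, c2, Complex.ext_iff, Quaternion.re_mul, Quaternion.imI_mul, Complex.sub_re,
    Complex.sub_im, Complex.mul_re, Complex.mul_im, Complex.conj_re, Complex.conj_im]
  constructor <;> ring

lemma c2_mul (p q : ℍ) : c2 (p * q) = c1 p * c2 q + c2 p * conj (c1 q) := by
  simp only [c1, c2, Complex.ext_iff, Quaternion.imJ_mul, Quaternion.imK_mul, Complex.add_re,
    Complex.add_im, Complex.mul_re, Complex.mul_im, Complex.conj_re, Complex.conj_im]
  constructor <;> ring

lemma ext_c1_c2 {p q : ℍ} (h1 : c1 p = c1 q) (h2 : c2 p = c2 q) : p = q := by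
  simp only [c1, c2, Complex.mk.injEq] at h1 h2
  ext <;> tauto

@[simp] lemma fst_dconj (z : DualNumber ℂ) : (dconj z).fst = conj z.fst := by simp [dconj]
@[simp] lemma snd_dconj (z : DualNumber ℂ) : (dconj z).snd = conj z.snd := by simp [dconj]

noncomputable def dconjRingHom : DualNumber ℂ →+* DualNumber ℂ where
  toFun := dconj
  map_one' := by ext <;> simp
  map_mul' x y := by ext <;> simp [add_comm]
  map_zero' := by ext <;> simp
  map_add' x y := by ext <;> simp

@[simp] lemma dconjRingHom_apply (z : DualNumber ℂ) : dconjRingHom z = dconj z := rfl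

@[simp] lemma dconj_zero : dconj 0 = 0 := map_zero dconjRingHom
@[simp] lemma dconj_one : dconj 1 = 1 := map_one dconjRingHom
@[simp] lemma dconj_add (z w : DualNumber ℂ) : dconj (z + w) = dconj z + dconj w :=
  map_add dconjRingHom z w
@[simp] lemma dconj_neg (z : DualNumber ℂ) : dconj (-z) = -dconj z := map_neg dconjRingHom z
@[simp] lemma dconj_mul (z w : DualNumber ℂ) : dconj (z * w) = dconj z * dconj w :=
  map_mul dconjRingHom z w

@[simp] lemma dconj_dconj (z : DualNumber ℂ) : dconj (dconj z) = z := by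
  ext <;> simp

noncomputable def dc1 : DualNumber ℍ →+ DualNumber ℂ :=
  AddMonoidHom.mk' (fun x => inl (c1 x.fst) + inr (c1 x.snd)) fun x y => by
    ext <;> simp [c1_add]

noncomputable def dc2 : DualNumber ℍ →+ DualNumber ℂ :=
  AddMonoidHom.mk' (fun x => inl (c2 x.fst) + inr (c2 x.snd)) fun x y => by
    ext <;> simp [c2_add]

@[simp] lemma fst_dc1 (x : DualNumber ℍ) : (dc1 x).fst = c1 x.fst := by simp [dc1]
@[simp] lemma snd_dc1 (x : DualNumber ℍ) : (dc1 x).snd = c1 x.snd := by simp [dc1]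
@[simp] lemma fst_dc2 (x : DualNumber ℍ) : (dc2 x).fst = c2 x.fst := by simp [dc2]
@[simp] lemma snd_dc2 (x : DualNumber ℍ) : (dc2 x).snd = c2 x.snd := by simp [dc2]

lemma ext_dc1_dc2 {x y : DualNumber ℍ} (h1 : dc1 x = dc1 y) (h2 : dc2 x = dc2 y) : x = y := by
  rw [TrivSqZeroExt.ext_iff] at h1 h2 ⊢
  simp only [fst_dc1, snd_dc1, fst_dc2, snd_dc2] at h1 h2
  exact ⟨ext_c1_c2 h1.1 h2.1, ext_c1_c2 h1.2 h2.2⟩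

lemma dc1_mul (x y : DualNumber ℍ) : dc1 (x * y) = dc1 x * dc1 y - dc2 x * dconj (dc2 y) := by
  ext
  · simp [c1_mul]
  · simp [c1_add, c1_mul]; ring

lemma dc2_mul (x y : DualNumber ℍ) : dc2 (x * y) = dc1 x * dc2 y + dc2 x * dconj (dc1 y) := by
  ext
  · simp [c2_mul]
  · simp [c2_add, c2_mul]; ring

@[simp] lemma dc1_one : dc1 1 = 1 := by ext <;> simp [c1_one, c1_zero]
@[simp] lemma dc2_one : dc2 1 = 0 := by ext <;> simp [c2_one, c2_zero]
@[simp] lemma dc1_inl_jq : dc1 (inl jq) = 0 := by ext <;> simp [c1_jq, c1_zero]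
@[simp] lemma dc2_inl_jq : dc2 (inl jq) = 1 := by ext <;> simp [c2_jq, c2_zero]
@[simp] lemma fst_toDQ (z : DualNumber ℂ) : (toDQ z).fst = ⟨z.fst.re, z.fst.im, 0, 0⟩ :=
  (fst_add _ _).trans (add_zero _)
@[simp] lemma snd_toDQ (z : DualNumber ℂ) : (toDQ z).snd = ⟨z.snd.re, z.snd.im, 0, 0⟩ :=
  (snd_add _ _).trans (zero_add _)
@[simp] lemma dc1_toDQ (z : DualNumber ℂ) : dc1 (toDQ z) = z := by
  ext <;> simp only [fst_dc1, snd_dc1, fst_toDQ, snd_toDQ] <;> rfl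
@[simp] lemma dc2_toDQ (z : DualNumber ℂ) : dc2 (toDQ z) = 0 := by
  ext <;> simp only [fst_dc2, snd_dc2, fst_toDQ, snd_toDQ] <;> rfl

lemma inl_jq_mul_self : (inl jq * inl jq : DualNumber ℍ) = -1 :=
  ext_dc1_dc2 (by simp [dc1_mul]) (by simp [dc2_mul])

lemma isUnit_inl_jq : IsUnit (inl jq : DualNumber ℍ) :=
  ⟨⟨inl jq, -inl jq, by rw [mul_neg, inl_jq_mul_self, neg_neg],
    by rw [neg_mul, inl_jq_mul_self, neg_neg]⟩, rfl⟩

lemma toDQ_mul_inl_jq (z : DualNumber ℂ) : toDQ z * inl jq = inl jq * toDQ (dconj z) :=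
  ext_dc1_dc2 (by simp [dc1_mul]) (by simp [dc2_mul])

section Vectors

variable {n : ℕ}

@[simp] lemma Fv_inl (v : Fin n → DualNumber ℍ) (i : Fin n) : Fv v (.inl i) = dc1 (v i) := rfl

@[simp] lemma Fv_inr (v : Fin n → DualNumber ℍ) (i : Fin n) :
    Fv v (.inr i) = -dconj (dc2 (v i)) := by
  ext <;> simp [Fv]

lemma Fv_injective : Function.Injective (Fv (n := n)) := by
  intro v w h
  funext i
  refine ext_dc1_dc2 (congrFun h (.inl i)) ?_
  simpa using congrArg (fun z => dconj (-z)) (congrFun h (.inr i))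

@[simp] lemma JQ_inl_inl (Q : Matrix (Fin n) (Fin n) (DualNumber ℍ)) (i j : Fin n) :
    JQ Q (.inl i) (.inl j) = dc1 (Q i j) := by
  ext <;> simp [JQ, dmC, chiQ]
@[simp] lemma JQ_inl_inr (Q : Matrix (Fin n) (Fin n) (DualNumber ℍ)) (i j : Fin n) :
    JQ Q (.inl i) (.inr j) = dc2 (Q i j) := by
  ext <;> simp [JQ, dmC, chiQ]
@[simp] lemma JQ_inr_inl (Q : Matrix (Fin n) (Fin n) (DualNumber ℍ)) (i j : Fin n) :
    JQ Q (.inr i) (.inl j) = -dconj (dc2 (Q i j)) := by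
  ext <;> simp [JQ, dmC, chiQ]
@[simp] lemma JQ_inr_inr (Q : Matrix (Fin n) (Fin n) (DualNumber ℍ)) (i j : Fin n) :
    JQ Q (.inr i) (.inr j) = dconj (dc1 (Q i j)) := by
  ext <;> simp [JQ, dmC, chiQ]

lemma Fv_mulVec (Q : Matrix (Fin n) (Fin n) (DualNumber ℍ)) (v : Fin n → DualNumber ℍ) :
    Fv (Q.mulVec v) = (JQ Q).mulVec (Fv v) := by
  funext x
  cases x with
  | inl i =>
    simp only [Matrix.mulVec, dotProduct, Fintype.sum_sum_type, ← Finset.sum_add_distrib,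
      Fv_inl, Fv_inr, JQ_inl_inl, JQ_inl_inr, map_sum, dc1_mul]
    exact Finset.sum_congr rfl fun j _ => by ring
  | inr i =>
    simp only [Matrix.mulVec, dotProduct, Fintype.sum_sum_type, ← Finset.sum_add_distrib,
      Fv_inl, Fv_inr, JQ_inr_inl, JQ_inr_inr, map_sum]
    rw [← dconjRingHom_apply, map_sum, ← Finset.sum_neg_distrib]
    refine Finset.sum_congr rfl fun j _ => ?_
    simp only [dconjRingHom_apply, dc2_mul, dconj_add, dconj_mul, dconj_dconj]
    ring

lemma Fv_mul_toDQ (v : Fin n → DualNumber ℍ) (lam : DualNumber ℂ) :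
    Fv (fun i => v i * toDQ lam) = lam • Fv v := by
  funext x
  cases x with
  | inl i => simp [dc1_mul, mul_comm]
  | inr i => simp [dc2_mul, mul_comm]

lemma mulVec_eq_mul_toDQ_iff (Q : Matrix (Fin n) (Fin n) (DualNumber ℍ))
    (v : Fin n → DualNumber ℍ) (lam : DualNumber ℂ) :
    (Q.mulVec v = fun i => v i * toDQ lam) ↔ (JQ Q).mulVec (Fv v) = lam • Fv v := by
  rw [← Fv_injective.eq_iff, Fv_mulVec, Fv_mul_toDQ]

lemma mulVec_vmulj (Q : Matrix (Fin n) (Fin n) (DualNumber ℍ)) (v : Fin n → DualNumber ℍ) :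
    Q.mulVec (vmulj v) = vmulj (Q.mulVec v) := by
  funext i
  simp only [Matrix.mulVec, dotProduct, vmulj, Finset.sum_mul, mul_assoc]

lemma mulVec_eq_mul_toDQ_iff_vmulj (Q : Matrix (Fin n) (Fin n) (DualNumber ℍ))
    (v : Fin n → DualNumber ℍ) (lam : DualNumber ℂ) :
    (Q.mulVec v = fun i => v i * toDQ lam) ↔
      (Q.mulVec (vmulj v) = fun i => vmulj v i * toDQ (dconj lam)) := by
  simp only [funext_iff, mulVec_vmulj, vmulj]
  refine forall_congr' fun i => ?_
  rw [mul_assoc (v i), ← toDQ_mul_inl_jq, ← mul_assoc, isUnit_inl_jq.mul_left_inj]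

lemma sum_dconj_Fv_mul_Fv_vmulj (v : Fin n → DualNumber ℍ) :
    ∑ i, dconj (Fv v i) * Fv (vmulj v) i = 0 := by
  rw [Fintype.sum_sum_type, ← Finset.sum_add_distrib]
  refine Finset.sum_eq_zero fun i _ => ?_
  simp [vmulj, dc1_mul, dc2_mul]
  ring

end Vectors

theorem stmt14 {n : ℕ} (Q : Matrix (Fin n) (Fin n) (DualNumber ℍ))
    (v : Fin n → DualNumber ℍ) (lam : DualNumber ℂ) :
    ((Q.mulVec v = fun i => v i * toDQ lam) ↔
      ((JQ Q).mulVec (Fv v) = lam • Fv v ∨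
        (JQ Q).mulVec (Fv (vmulj v)) = dconj lam • Fv (vmulj v))) ∧
    ∑ i, dconj (Fv v i) * Fv (vmulj v) i = 0 := by
  refine ⟨?_, sum_dconj_Fv_mul_Fv_vmulj v⟩
  rw [← mulVec_eq_mul_toDQ_iff, ← mulVec_eq_mul_toDQ_iff, ← mulVec_eq_mul_toDQ_iff_vmulj, or_self]
end

section
/- Let Â = A_s + A_d·ε be the 3×3 dual quaternion matrix with A_s = !![2,1,0; 0,2,0; 0,0,1] and A_d = !![1,0,0; 0,0,0; 0,0,0] (entries real, regarded as quaternions). Then for every quaternion α, the dual quaternion 2 + α·ε is a right eigenvalue of Â: there exists an appreciable vector x̂ : Fin 3 → DualNumber ℍ with Â.mulVec x̂ = fun i => (x̂ i) * (2 + α·ε). (In particular Â, whose standard part has the dominant eigenvalue 2 with algebraic multiplicity 2 but geometric multiplicity 1, still has eigenvalues with standard part 2.) -/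
local notation "ℍ" => Quaternion ℝ

theorem stmt15 (α : ℍ) :
    ∃ x : Fin 3 → DualNumber ℍ, (fun i => (x i).fst) ≠ 0 ∧
      (dm !![2, 1, 0; 0, 2, 0; 0, 0, 1] !![1, 0, 0; 0, 0, 0; 0, 0, 0]).mulVec x =
        fun i => x i * (TrivSqZeroExt.inl 2 + TrivSqZeroExt.inr α : DualNumber ℍ) := by
  refine ⟨![TrivSqZeroExt.inl 1, TrivSqZeroExt.inr (α - 1), 0], ?_, ?_⟩
  · intro h
    have := congrFun h 0
    simp at this
  · funext i
    fin_cases i <;>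
      simp only [Fin.zero_eta, Fin.mk_one, Fin.reduceFinMk] <;>
    · refine TrivSqZeroExt.ext ?_ ?_ <;>
      simp only [dm, Matrix.mulVec, dotProduct, Fin.sum_univ_three,
        Matrix.add_apply, Matrix.map_apply, Matrix.of_apply, Matrix.cons_val_zero,
        Matrix.cons_val_one, Matrix.head_cons, Matrix.cons_val_two, Matrix.tail_cons,
        TrivSqZeroExt.fst_add, TrivSqZeroExt.snd_add, TrivSqZeroExt.fst_mul,
        TrivSqZeroExt.snd_mul, TrivSqZeroExt.fst_inl, TrivSqZeroExt.snd_inl,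
        TrivSqZeroExt.fst_inr, TrivSqZeroExt.snd_inr, TrivSqZeroExt.fst_zero,
        TrivSqZeroExt.snd_zero, smul_eq_mul, MulOpposite.smul_eq_mul_unop,
        MulOpposite.unop_op, op_smul_eq_mul] <;>
      noncomm_ring <;> simp [two_smul] <;> norm_num
end

section
/- Let Â = A_s + A_d·ε be the 3×3 dual quaternion matrix with A_s = !![2,0,0; 0,1,1; 0,0,1] and A_d = identity (entries real, regarded as quaternions). Then for every quaternion α, the dual quaternion 1 + α·ε is a right eigenvalue of Â: there exists an appreciable vector x̂ : Fin 3 → DualNumber ℍ with Â.mulVec x̂ = fun i => (x̂ i) * (1 + α·ε). In particular, Â has infinitely many right eigenvalues. -/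
local notation "ℍ" => Quaternion ℝ

instance : Infinite ℍ := Infinite.of_injective ((↑·) : ℝ → ℍ) Quaternion.coe_injective

lemma key (α : ℍ) : ∃ x : Fin 3 → DualNumber ℍ, (fun i => (x i).fst) ≠ 0 ∧
      (dm !![2, 0, 0; 0, 1, 1; 0, 0, 1] 1).mulVec x =
        fun i => x i * (TrivSqZeroExt.inl 1 + TrivSqZeroExt.inr α : DualNumber ℍ) := by
  refine ⟨![0, TrivSqZeroExt.inl 1, TrivSqZeroExt.inr (α - 1)], ?_, ?_⟩
  · intro h
    have := congrFun h 1
    simp at this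
  · funext i
    fin_cases i
    · simp [dm, Matrix.mulVec, dotProduct, Fin.sum_univ_three, Matrix.one_apply]
    · simp [dm, Matrix.mulVec, dotProduct, Fin.sum_univ_three, Matrix.one_apply]
      rw [sub_smul, one_smul]; abel
    · simp [dm, Matrix.mulVec, dotProduct, Fin.sum_univ_three, Matrix.one_apply]
      ext <;> simp [TrivSqZeroExt.fst_mul, TrivSqZeroExt.snd_mul]

theorem stmt16 :
    (∀ α : ℍ, ∃ x : Fin 3 → DualNumber ℍ, (fun i => (x i).fst) ≠ 0 ∧
      (dm !![2, 0, 0; 0, 1, 1; 0, 0, 1] 1).mulVec x =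
        fun i => x i * (TrivSqZeroExt.inl 1 + TrivSqZeroExt.inr α : DualNumber ℍ)) ∧
    {lam : DualNumber ℍ | ∃ x : Fin 3 → DualNumber ℍ, (fun i => (x i).fst) ≠ 0 ∧
      (dm !![2, 0, 0; 0, 1, 1; 0, 0, 1] 1).mulVec x = fun i => x i * lam}.Infinite := by
  refine ⟨key, ?_⟩
  apply Set.infinite_of_injective_forall_mem
    (f := fun α : ℍ => (TrivSqZeroExt.inl 1 + TrivSqZeroExt.inr α : DualNumber ℍ))
  · intro a b hab
    have := congrArg TrivSqZeroExt.snd hab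
    simpa using this
  · intro α
    exact key α
end

section
/- Let n ≥ 4 and let L^w be the n×n complex matrix in block form L^w = fromBlocks(L_{n−1}, 0, s, n−1), where L_{n−1} is the (n−1)×(n−1) directed-cycle Laplacian (1 on the diagonal, −1 in positions (i, i+1 mod n−1), 0 elsewhere), the top-right block is the zero column, s is the row vector of all ones of length n−1, and the bottom-right entry is n−1 (the Laplacian of the directed wheel graph on n vertices). Then: (a) n−1 is a root of the characteristic polynomial of L^w; and (b) every root μ of the characteristic polynomial of L^w with μ ≠ n−1 is of the form 1 − ζ for some (n−1)-th root of unity ζ, hence satisfies |μ| ≤ 2 < n−1. In particular n−1 is the strict dominant eigenvalue of L^w. -/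
/-- The Laplacian matrix of the directed `m`-cycle: `1` on the diagonal, `-1` in
position `(i, i+1 mod m)`, `0` elsewhere. -/
def cycL (m : ℕ) : Matrix (Fin m) (Fin m) ℂ :=
  Matrix.of fun i j =>
    if (j : ℕ) = (i : ℕ) then 1 else if (j : ℕ) = ((i : ℕ) + 1) % m then -1 else 0

/-- The Laplacian matrix of the directed wheel graph on `n` vertices. -/
def wheelL (n : ℕ) : Matrix (Fin (n - 1) ⊕ Fin 1) (Fin (n - 1) ⊕ Fin 1) ℂ :=
  Matrix.fromBlocks (cycL (n - 1)) 0 (Matrix.of fun _ _ => 1)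
    (Matrix.of fun _ _ => (n : ℂ) - 1)

/-!
The wheel Laplacian is block lower triangular, so its characteristic polynomial is
`charpoly L_{n-1} * (X - (n - 1))`. If `μ` is an eigenvalue of the cycle Laplacian with
eigenvector `v`, the eigen-equation reads `v (i + 1) = (1 - μ) v i`, so `v` is a geometric
progression with ratio `ζ = 1 - μ` around the cycle; closing up after `n - 1` steps forces
`ζ ^ (n - 1) = 1`, whence `|μ| = |1 - ζ| ≤ 2`.
-/

open Polynomial Matrix

lemma charpoly_of_unique {ι R : Type*} [Unique ι] [Fintype ι] [DecidableEq ι] [CommRing R]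
    (M : Matrix ι ι R) : M.charpoly = X - C (M default default) := by
  simp [charpoly, det_unique, charmatrix_apply_eq]

lemma cycL_apply (k : ℕ) (i j : Fin (k + 2)) :
    cycL (k + 2) i j = if j = i then 1 else if j = i + 1 then -1 else 0 := by
  have hsucc : ((i + 1 : Fin (k + 2)) : ℕ) = ((i : ℕ) + 1) % (k + 2) := by
    simp [Fin.val_add]
  simp only [cycL, of_apply, Fin.ext_iff, hsucc]

lemma cycL_mulVec_apply (k : ℕ) (v : Fin (k + 2) → ℂ) (i : Fin (k + 2)) :
    (cycL (k + 2) *ᵥ v) i = v i - v (i + 1) := by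
  have hne : i + 1 ≠ i := by simp
  simp [mulVec, dotProduct, cycL_apply, ite_mul, Finset.sum_ite, Finset.filter_ne', hne,
    Finset.filter_eq', sub_eq_add_neg]

open Fin.NatCast in
lemma exists_root_of_unity_of_isRoot_charpoly_cycL {m : ℕ} (hm : 2 ≤ m) {μ : ℂ}
    (hμ : (cycL m).charpoly.IsRoot μ) : ∃ ζ : ℂ, ζ ^ m = 1 ∧ μ = 1 - ζ := by
  obtain ⟨k, rfl⟩ := Nat.exists_eq_add_of_le' hm
  rw [IsRoot, eval_charpoly, ← exists_mulVec_eq_zero_iff] at hμ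
  obtain ⟨v, hv, hμv⟩ := hμ
  obtain ⟨i, hi⟩ := Function.ne_iff.mp hv
  set ζ := 1 - μ
  have hstep : ∀ j, v (j + 1) = ζ * v j := by
    intro j
    have := congrFun hμv j
    rw [sub_mulVec, Pi.sub_apply, cycL_mulVec_apply] at this
    simp only [scalar_apply, mulVec_diagonal, Pi.zero_apply] at this
    linear_combination this
  have hgeom : ∀ r : ℕ, v (i + (r : Fin (k + 2))) = ζ ^ r * v i := by
    intro r
    induction r with
    | zero => simp
    | succ r ih => rw [Nat.cast_succ, ← add_assoc, hstep, ih, pow_succ]; ring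
  refine ⟨ζ, ?_, by ring⟩
  have := hgeom (k + 2)
  rw [Fin.natCast_self, add_zero] at this
  exact (mul_eq_right₀ hi).mp this.symm

lemma charpoly_wheelL (n : ℕ) :
    (wheelL n).charpoly = (cycL (n - 1)).charpoly * (X - C ((n : ℂ) - 1)) := by
  rw [wheelL, charpoly_fromBlocks_zero₁₂, charpoly_of_unique (of fun _ _ => _), of_apply]

theorem stmt19 (n : ℕ) (hn : 4 ≤ n) :
    (wheelL n).charpoly.IsRoot ((n : ℂ) - 1) ∧
      (∀ μ : ℂ, (wheelL n).charpoly.IsRoot μ → μ ≠ (n : ℂ) - 1 →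
        (∃ ζ : ℂ, ζ ^ (n - 1) = 1 ∧ μ = 1 - ζ) ∧ ‖μ‖ ≤ 2) ∧
      (2 : ℝ) < (n : ℝ) - 1 := by
  refine ⟨by simp [charpoly_wheelL], fun μ hμ hne => ?_, ?_⟩
  · rw [charpoly_wheelL, IsRoot, eval_mul, mul_eq_zero, eval_sub, eval_X, eval_C,
      sub_eq_zero] at hμ
    obtain ⟨ζ, hζ, rfl⟩ := exists_root_of_unity_of_isRoot_charpoly_cycL (by omega) <|
      hμ.resolve_right hne
    refine ⟨⟨ζ, hζ, rfl⟩, ?_⟩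
    calc ‖1 - ζ‖ ≤ ‖(1 : ℂ)‖ + ‖ζ‖ := norm_sub_le _ _
      _ = 2 := by rw [norm_one, Complex.norm_eq_one_of_pow_eq_one hζ (by omega)]; norm_num
  · have : (4 : ℝ) ≤ n := by exact_mod_cast hn
    linarith
end
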